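/- arXiv:1310.5202 — 6 statements merged into one kernel-verified Lean document; each statement's English description precedes it below -/
import Mathlib

section
/- Let S be a finite set and let 𝒜 and ℬ be nondegenerate hierarchies over S. The ordered pair (𝒜,ℬ) is an NNI edge (i.e., ℬ is the result of an NNI move on 𝒜 at some grandchild of 𝒜) if and only if there exists one and only one ordered triple (A,B,C) of clusters common to 𝒜 and ℬ such that 𝒜 \ ℬ = {A ∪ B} and ℬ \ 𝒜 = {B ∪ C}. -/
open scoped Classical

namespace TreeDist

variable {α : Type*} [DecidableEq α]

/-- Two finite sets are compatible if they are disjoint or nested. -/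
def Compatible (A B : Finset α) : Prop :=
  A ∩ B = ∅ ∨ A ⊆ B ∨ B ⊆ A

/-- A hierarchy over `S`: a laminar family of nonempty subsets of `S`
containing `S` and all singletons. -/
def IsHierarchy (S : Finset α) (F : Finset (Finset α)) : Prop :=
  (∀ A ∈ F, A ⊆ S ∧ A.Nonempty) ∧
  (∀ A ∈ F, ∀ B ∈ F, Compatible A B) ∧
  S ∈ F ∧ ∀ i ∈ S, ({i} : Finset α) ∈ F

/-- A nondegenerate (binary) hierarchy: a hierarchy with `2|S| - 1` clusters,
equivalently a maximal laminar family. -/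
def Nondeg (S : Finset α) (F : Finset (Finset α)) : Prop :=
  IsHierarchy S F ∧ F.card = 2 * S.card - 1

/-- `P` is the parent of `I` in the family `F`: the smallest cluster of `F`
strictly containing `I`. -/
def IsParent (F : Finset (Finset α)) (I P : Finset α) : Prop :=
  P ∈ F ∧ I ⊂ P ∧ ∀ Q ∈ F, I ⊂ Q → P ⊆ Q

/-- `G` is the result of an NNI move on `F` at some grandchild `C`:
`G = (F \ {parent C}) ∪ {grandparent C \ C}`. -/
def IsNNIMove (F G : Finset (Finset α)) : Prop :=
  ∃ C P GP, C ∈ F ∧ IsParent F C P ∧ IsParent F P GP ∧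
    G = insert (GP \ C) (F.erase P)

/-- Restriction of a family of sets to `K`: `{A ∩ K : A ∈ F, A ∩ K ≠ ∅}`. -/
noncomputable def restrictFam (F : Finset (Finset α)) (K : Finset α) : Finset (Finset α) :=
  (F.image (· ∩ K)).filter fun A => A.Nonempty

/-- The cardinality of the smallest common ancestor of `i` and `j` in `F`, i.e. the
minimum cardinality of a cluster of `F` containing both `i` and `j`. -/
noncomputable def caCard (F : Finset (Finset α)) (i j : α) : ℕ :=
  sInf {n | ∃ A ∈ F, i ∈ A ∧ j ∈ A ∧ A.card = n}

/-- Ultrametric representation `U(F)_{ij} = |ca(i,j)| - 1`. -/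
noncomputable def Umat (F : Finset (Finset α)) (i j : α) : ℤ :=
  (caCard F i j : ℤ) - 1

/-- Cluster-cardinality distance `d_CC = (1/2) Σ_{i,j ∈ S} |U(F)_{ij} - U(G)_{ij}|`. -/
noncomputable def dCC (S : Finset α) (F G : Finset (Finset α)) : ℚ :=
  (1 / 2) * ∑ i ∈ S, ∑ j ∈ S, |((Umat F i j : ℚ)) - ((Umat G i j : ℚ))|

/-- Robinson–Foulds distance: half the size of the symmetric difference of cluster sets. -/
noncomputable def dRF (F G : Finset (Finset α)) : ℚ :=
  (((F \ G) ∪ (G \ F)).card : ℚ) / 2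

/-- Crossing dissimilarity: the number of incompatible pairs of clusters. -/
noncomputable def dCM (F G : Finset (Finset α)) : ℕ :=
  ((F ×ˢ G).filter fun p => ¬ Compatible p.1 p.2).card

/-- Depth of a cluster: the number of its strict ancestors in `F`. -/
noncomputable def depth (F : Finset (Finset α)) (I : Finset α) : ℕ :=
  (F.filter fun J => I ⊂ J).card

/-- The children of `I` in `F`: the clusters of `F` whose parent is `I`. -/
noncomputable def children (F : Finset (Finset α)) (I : Finset α) : Finset (Finset α) :=
  F.filter fun C => IsParent F C I

/-- `η_{F,G}(I,J)`: the number of members of `(children I)|_J` incompatible with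
the family `(children J)|_I`. -/
noncomputable def eta (F G : Finset (Finset α)) (I J : Finset α) : ℕ :=
  ((restrictFam (children F I) J).filter
    fun A => ∃ B ∈ restrictFam (children G J) I, ¬ Compatible A B).card

/-- `θ(x) = (x² + x)/2`. -/
def theta (x : ℕ) : ℚ := ((x : ℚ) ^ 2 + x) / 2

/-- Closed-form NNI navigation distance `d_Nav(F,G) = Σ_{I∈F, J∈G} θ(η_{F,G}(I,J))`. -/
noncomputable def dNav (F G : Finset (Finset α)) : ℚ :=
  ∑ I ∈ F, ∑ J ∈ G, theta (eta F G I J)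

/-!
Write `P = A ∪ B` for the cluster an NNI move removes and `N = B ∪ C` for the one it adds. For a
move at the grandchild `A` with parent `P` and grandparent `R`, the siblings `B = P \ A` and
`C = R \ P` are again clusters by maximality of the hierarchy, and `N = R \ A` crosses `P`.
Conversely, if `F` and `G` differ only by `P` and `N`, then `P` and `N` cross: otherwise `N`
would be compatible with every cluster of `F` and maximality would put it in `F`. Crossing forces
`A`, `B`, `C` to be pairwise disjoint, so `(A, B, C) = (P \ N, P ∩ N, N \ P)` is unique, `A` is a
child of `P` and `P` a child of `P ∪ N` in `F`.
-/

open Finset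

section Compatible

variable {A B Q X Y : Finset α}

theorem Compatible.symm (h : Compatible A B) : Compatible B A := by
  rcases h with h | h | h
  · exact Or.inl (by rwa [inter_comm])
  · exact Or.inr (Or.inr h)
  · exact Or.inr (Or.inl h)

theorem compatible_of_subset (h : A ⊆ B) : Compatible A B := Or.inr (Or.inl h)

theorem compatible_of_disjoint (h : Disjoint A B) : Compatible A B :=
  Or.inl (disjoint_iff_inter_eq_empty.mp h)

theorem Compatible.subset_or_subset (h : Compatible A B) (hne : (A ∩ B).Nonempty) :
    A ⊆ B ∨ B ⊆ A :=
  h.resolve_left hne.ne_empty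

theorem not_compatible_iff :
    ¬Compatible A B ↔ (A ∩ B).Nonempty ∧ ¬A ⊆ B ∧ ¬B ⊆ A := by
  simp only [Compatible, not_or, nonempty_iff_ne_empty]

theorem Compatible.union_right (hX : Compatible Q X) (hY : Compatible Q Y)
    (hXY : (X ∩ Y).Nonempty) : Compatible Q (X ∪ Y) := by
  obtain ⟨x, hx⟩ := hXY
  rw [mem_inter] at hx
  rcases hX with hX | hX | hX
  · rcases hY with hY | hY | hY
    · exact Or.inl (by rw [inter_union_distrib_left, hX, hY, union_empty])
    · exact compatible_of_subset (hY.trans subset_union_right)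
    · exact absurd (hX ▸ mem_inter.mpr ⟨hY hx.2, hx.1⟩) (notMem_empty x)
  · exact compatible_of_subset (hX.trans subset_union_left)
  · rcases hY with hY | hY | hY
    · exact absurd (hY ▸ mem_inter.mpr ⟨hX hx.1, hx.2⟩) (notMem_empty x)
    · exact compatible_of_subset (hY.trans subset_union_right)
    · exact (compatible_of_subset (union_subset hX hY)).symm

end Compatible

theorem card_le_of_laminar (S : Finset α) (L : Finset (Finset α))
    (hsub : ∀ A ∈ L, A ⊆ S ∧ A.Nonempty) (hlam : ∀ A ∈ L, ∀ B ∈ L, Compatible A B) :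
    L.card ≤ 2 * S.card - 1 := by
  induction S using strongInduction generalizing L with
  | H S ih =>
  rcases (L.erase S).eq_empty_or_nonempty with hL | hL
  · have hLS : L ⊆ {S} := fun A hA => by
      by_contra hAS
      exact (eq_empty_iff_forall_notMem.mp hL) A (mem_erase.mpr ⟨mem_singleton.not.mp hAS, hA⟩)
    obtain rfl | ⟨A, hA⟩ := L.eq_empty_or_nonempty
    · simp
    have hS : 0 < S.card := ((hsub A hA).2.mono (hsub A hA).1).card_pos
    have := card_le_card hLS
    rw [card_singleton] at this
    omega
  obtain ⟨M, hM, hMmax⟩ := (L.erase S).exists_max_image card hL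
  obtain ⟨hMS, hML⟩ := mem_erase.mp hM
  obtain ⟨hMsub, hMne⟩ := hsub M hML
  have hMssub : M ⊂ S := hMsub.ssubset_of_ne hMS
  -- every other cluster is inside the largest proper cluster `M` or disjoint from it
  have hcover : L.erase S ⊆ (L.filter (· ⊆ M)) ∪ (L.filter (· ⊆ S \ M)) := by
    intro A hA
    obtain ⟨-, hAL⟩ := mem_erase.mp hA
    simp only [mem_union, mem_filter, subset_sdiff, disjoint_iff_inter_eq_empty]
    rcases hlam A hAL M hML with h | h | h
    · exact Or.inr ⟨hAL, (hsub A hAL).1, h⟩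
    · exact Or.inl ⟨hAL, h⟩
    · exact Or.inl ⟨hAL, (eq_of_subset_of_card_le h (hMmax A hA)).ge⟩
  have hrestrict (T : Finset α) (hT : T ⊂ S) :
      (L.filter (· ⊆ T)).card ≤ 2 * T.card - 1 :=
    ih T hT _ (fun A hA => ⟨(mem_filter.mp hA).2, (hsub A (mem_filter.mp hA).1).2⟩)
      (fun A hA B hB => hlam A (mem_filter.mp hA).1 B (mem_filter.mp hB).1)
  have hin := hrestrict M hMssub
  have hout := hrestrict (S \ M) (sdiff_ssubset hMsub hMne)
  have hsplit := card_sdiff_of_subset hMsub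
  have hcomp : 0 < (S \ M).card := card_pos.mpr (sdiff_nonempty.mpr hMssub.not_subset)
  have := card_le_card hcover
  have := card_union_le (L.filter (· ⊆ M)) (L.filter (· ⊆ S \ M))
  have := pred_card_le_card_erase (s := L) (a := S)
  have := hMne.card_pos
  omega

theorem Nondeg.mem_of_forall_compatible {S : Finset α} {F : Finset (Finset α)} (hF : Nondeg S F)
    {X : Finset α} (hXS : X ⊆ S) (hX : X.Nonempty) (hcomp : ∀ Q ∈ F, Compatible X Q) :
    X ∈ F := by
  by_contra hXF
  have hbound := card_le_of_laminar S (insert X F)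
    (by simpa [hXS, hX] using hF.1.1)
    (by
      simp only [mem_insert, forall_eq_or_imp]
      exact ⟨⟨compatible_of_subset subset_rfl, hcomp⟩,
        fun A hA => ⟨(hcomp A hA).symm, hF.1.2.1 A hA⟩⟩)
  rw [card_insert_of_notMem hXF, hF.2] at hbound
  have := (hX.mono hXS).card_pos
  omega

theorem Nondeg.sdiff_mem_of_isParent {S : Finset α} {F : Finset (Finset α)} (hF : Nondeg S F)
    {C P : Finset α} (hC : C ∈ F) (hCP : IsParent F C P) : P \ C ∈ F := by
  obtain ⟨hP, hCsP, hPmin⟩ := hCP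
  refine hF.mem_of_forall_compatible (sdiff_subset.trans (hF.1.1 P hP).1)
    (sdiff_nonempty.mpr hCsP.not_subset) fun Q hQ => ?_
  rcases hF.1.2.1 Q hQ C hC with hQC | hQC | hCQ
  · rcases hF.1.2.1 Q hQ P hP with hQP | hQP | hPQ
    · exact compatible_of_disjoint
        ((disjoint_iff_inter_eq_empty.mpr hQP).symm.mono_left sdiff_subset)
    · exact (compatible_of_subset
        (subset_sdiff.mpr ⟨hQP, disjoint_iff_inter_eq_empty.mpr hQC⟩)).symm
    · exact compatible_of_subset (sdiff_subset.trans hPQ)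
  · exact compatible_of_disjoint (sdiff_disjoint.mono_right hQC)
  · obtain rfl | hCQ := hCQ.eq_or_ssubset
    · exact compatible_of_disjoint sdiff_disjoint
    · exact compatible_of_subset (sdiff_subset.trans (hPmin Q hQ hCQ))

theorem not_compatible_sdiff_of_ssubset {C P R : Finset α} (hC : C.Nonempty) (hCP : C ⊂ P)
    (hPR : P ⊂ R) : ¬Compatible P (R \ C) := by
  refine not_compatible_iff.mpr ⟨?_, fun h => ?_, fun h => ?_⟩
  · obtain ⟨x, hxP, hxC⟩ := exists_of_ssubset hCP
    exact ⟨x, mem_inter.mpr ⟨hxP, mem_sdiff.mpr ⟨hPR.subset hxP, hxC⟩⟩⟩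
  · obtain ⟨x, hx⟩ := hC
    exact (mem_sdiff.mp (h (hCP.subset hx))).2 hx
  · exact hPR.not_subset fun x hx => by
      by_cases hxC : x ∈ C
      · exact hCP.subset hxC
      · exact h (mem_sdiff.mpr ⟨hx, hxC⟩)

theorem sdiff_eq_singleton_and_sdiff_eq_singleton_iff {β : Type*} [DecidableEq β]
    {F G : Finset β} {P N : β} (hP : P ∈ F) (hN : N ∉ F) :
    F \ G = {P} ∧ G \ F = {N} ↔ G = insert N (F.erase P) := by
  constructor
  · rintro ⟨hFG, hGF⟩
    ext X
    have h1 := Finset.ext_iff.mp hFG X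
    have h2 := Finset.ext_iff.mp hGF X
    simp only [mem_sdiff, mem_singleton] at h1 h2
    simp only [mem_insert, mem_erase]
    grind
  · rintro rfl
    constructor <;> ext X <;>
      simp only [mem_sdiff, mem_insert, mem_erase, mem_singleton] <;> grind

theorem triple_eq_of_disjoint {A B C : Finset α} (hAB : Disjoint A B) (hBC : Disjoint B C)
    (hAC : Disjoint A C) :
    (A, B, C) = ((A ∪ B) \ (B ∪ C), (A ∪ B) ∩ (B ∪ C), (B ∪ C) \ (A ∪ B)) := by
  rw [disjoint_left] at hAB hBC hAC
  simp only [Prod.mk.injEq]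
  refine ⟨?_, ?_, ?_⟩ <;> ext x <;> simp only [mem_sdiff, mem_inter, mem_union] <;> grind

/-- In an NNI move at the grandchild `A`, `B` is the sibling of `A` and `C` the sibling of its
parent. -/
def IsNNITriple (F G : Finset (Finset α)) (A B C : Finset α) : Prop :=
  (A ∈ F ∧ A ∈ G) ∧ (B ∈ F ∧ B ∈ G) ∧ (C ∈ F ∧ C ∈ G) ∧
    F \ G = {A ∪ B} ∧ G \ F = {B ∪ C}

theorem isNNITriple_insert_erase {S : Finset α} {F : Finset (Finset α)} (hF : Nondeg S F)
    {C P R : Finset α} (hC : C ∈ F) (hCP : IsParent F C P) (hPR : IsParent F P R) :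
    IsNNITriple F (insert (R \ C) (F.erase P)) C (P \ C) (R \ P) := by
  obtain ⟨x, hxC⟩ := (hF.1.1 C hC).2
  have hxP : x ∈ P := hCP.2.1.subset hxC
  have hNF : R \ C ∉ F := fun hN =>
    not_compatible_sdiff_of_ssubset ⟨x, hxC⟩ hCP.2.1 hPR.2.1 (hF.1.2.1 P hCP.1 _ hN)
  have hmem {X : Finset α} (hX : X ∈ F) (hXP : X ≠ P) : X ∈ insert (R \ C) (F.erase P) :=
    mem_insert_of_mem (mem_erase.mpr ⟨hXP, hX⟩)
  have hB := hF.sdiff_mem_of_isParent hC hCP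
  have hD := hF.sdiff_mem_of_isParent hCP.1 hPR
  refine ⟨⟨hC, hmem hC hCP.2.1.ne⟩, ⟨hB, hmem hB fun h => ?_⟩, ⟨hD, hmem hD fun h => ?_⟩, ?_⟩
  · exact (mem_sdiff.mp (h ▸ hxP)).2 hxC
  · exact (mem_sdiff.mp (h ▸ hxP)).2 hxP
  · rw [union_sdiff_of_subset hCP.2.1.subset, union_comm,
      sdiff_union_sdiff_cancel hPR.2.1.subset hCP.2.1.subset]
    exact (sdiff_eq_singleton_and_sdiff_eq_singleton_iff hCP.1 hNF).mpr rfl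

namespace IsNNITriple

variable {S : Finset α} {F G : Finset (Finset α)} {A B C : Finset α}

theorem union_mem_sdiff_left (h : IsNNITriple F G A B C) : A ∪ B ∈ F \ G :=
  h.2.2.2.1 ▸ mem_singleton_self _

theorem union_mem_sdiff_right (h : IsNNITriple F G A B C) : B ∪ C ∈ G \ F :=
  h.2.2.2.2 ▸ mem_singleton_self _

theorem compatible_union_right (hG : IsHierarchy S G) (h : IsNNITriple F G A B C)
    {Q : Finset α} (hQ : Q ∈ F) (hQP : Q ≠ A ∪ B) : Compatible Q (B ∪ C) := by
  have hQG : Q ∈ G := by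
    by_contra hQG
    exact hQP (mem_singleton.mp (h.2.2.2.1 ▸ mem_sdiff.mpr ⟨hQ, hQG⟩))
  exact hG.2.1 Q hQG _ (mem_sdiff.mp h.union_mem_sdiff_right).1

/-- Were they compatible, `B ∪ C` would be compatible with every cluster of `F`, so the
maximality of `F` would put it in `F`. -/
theorem not_compatible (hF : Nondeg S F) (hG : IsHierarchy S G) (h : IsNNITriple F G A B C) :
    ¬Compatible (A ∪ B) (B ∪ C) := by
  intro hPN
  obtain ⟨hNG, hNF⟩ := mem_sdiff.mp h.union_mem_sdiff_right
  refine hNF (hF.mem_of_forall_compatible (hG.1 _ hNG).1 (hG.1 _ hNG).2 fun Q hQ => ?_)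
  obtain rfl | hQP := eq_or_ne Q (A ∪ B)
  · exact hPN.symm
  · exact (h.compatible_union_right hG hQ hQP).symm

theorem pairwise_disjoint (hF : Nondeg S F) (hG : IsHierarchy S G) (h : IsNNITriple F G A B C) :
    Disjoint A B ∧ Disjoint B C ∧ Disjoint A C := by
  have hPG := (mem_sdiff.mp h.union_mem_sdiff_left).2
  have hNF := (mem_sdiff.mp h.union_mem_sdiff_right).2
  have hPN := not_compatible_iff.mp (h.not_compatible hF hG)
  obtain ⟨⟨hAF, hAG⟩, ⟨hBF, hBG⟩, ⟨hCF, -⟩, -⟩ := h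
  simp only [disjoint_iff_inter_eq_empty]
  refine ⟨?_, ?_, ?_⟩
  · rcases hF.1.2.1 A hAF B hBF with hAB | hAB | hBA
    · exact hAB
    · exact (hPG (by rwa [union_eq_right.mpr hAB])).elim
    · exact (hPG (by rwa [union_eq_left.mpr hBA])).elim
  · rcases hF.1.2.1 B hBF C hCF with hBC | hBC | hCB
    · exact hBC
    · exact (hNF (by rwa [union_eq_right.mpr hBC])).elim
    · exact (hNF (by rwa [union_eq_left.mpr hCB])).elim
  · rcases hF.1.2.1 A hAF C hCF with hAC | hAC | hCA
    · exact hAC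
    · exact absurd (union_subset (hAC.trans subset_union_right) subset_union_left) hPN.2.1
    · exact absurd (union_subset subset_union_right (hCA.trans subset_union_left)) hPN.2.2

theorem unique (hF : Nondeg S F) (hG : IsHierarchy S G) (h : IsNNITriple F G A B C)
    {A' B' C' : Finset α} (h' : IsNNITriple F G A' B' C') : (A', B', C') = (A, B, C) := by
  obtain ⟨hAB, hBC, hAC⟩ := h.pairwise_disjoint hF hG
  obtain ⟨hAB', hBC', hAC'⟩ := h'.pairwise_disjoint hF hG
  have hP : A' ∪ B' = A ∪ B := singleton_injective (h'.2.2.2.1.symm.trans h.2.2.2.1)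
  have hN : B' ∪ C' = B ∪ C := singleton_injective (h'.2.2.2.2.symm.trans h.2.2.2.2)
  rw [triple_eq_of_disjoint hAB hBC hAC, triple_eq_of_disjoint hAB' hBC' hAC', hP, hN]

theorem isParent_left (hF : Nondeg S F) (hG : IsHierarchy S G) (h : IsNNITriple F G A B C) :
    IsParent F A (A ∪ B) := by
  obtain ⟨hAB, -, hAC⟩ := h.pairwise_disjoint hF hG
  have hPN := not_compatible_iff.mp (h.not_compatible hF hG)
  have hPF := (mem_sdiff.mp h.union_mem_sdiff_left).1
  obtain ⟨a, ha⟩ := (hF.1.1 A h.1.1).2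
  obtain ⟨b, hb⟩ := (hF.1.1 B h.2.1.1).2
  refine ⟨hPF, (ssubset_iff_of_subset subset_union_left).mpr
    ⟨b, mem_union_right _ hb, disjoint_right.mp hAB hb⟩, fun Q hQ hAQ => ?_⟩
  obtain rfl | hQP := eq_or_ne Q (A ∪ B)
  · exact subset_rfl
  refine ((hF.1.2.1 Q hQ _ hPF).subset_or_subset
    ⟨a, mem_inter.mpr ⟨hAQ.subset ha, mem_union_left _ ha⟩⟩).resolve_left fun hQsP => ?_
  obtain ⟨x, hxQ, hxA⟩ := exists_of_ssubset hAQ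
  have hxB : x ∈ B := (mem_union.mp (hQsP hxQ)).resolve_left hxA
  rcases (h.compatible_union_right hG hQ hQP).subset_or_subset
    ⟨x, mem_inter.mpr ⟨hxQ, mem_union_left _ hxB⟩⟩ with hQsN | hNsQ
  · exact disjoint_left.mp (disjoint_union_right.mpr ⟨hAB, hAC⟩) ha (hQsN (hAQ.subset ha))
  · exact hPN.2.2 (hNsQ.trans hQsP)

theorem isParent_union (hF : Nondeg S F) (hG : IsHierarchy S G) (h : IsNNITriple F G A B C) :
    IsParent F (A ∪ B) (A ∪ B ∪ (B ∪ C)) := by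
  obtain ⟨-, hBC, hAC⟩ := h.pairwise_disjoint hF hG
  have hPN := not_compatible_iff.mp (h.not_compatible hF hG)
  have hPF := (mem_sdiff.mp h.union_mem_sdiff_left).1
  have hNG := (mem_sdiff.mp h.union_mem_sdiff_right).1
  obtain ⟨b, hb⟩ := (hF.1.1 B h.2.1.1).2
  obtain ⟨c, hc⟩ := (hF.1.1 C h.2.2.1.1).2
  have hbP : b ∈ A ∪ B := mem_union_right _ hb
  have hbN : b ∈ B ∪ C := mem_union_left _ hb
  have hRF : A ∪ B ∪ (B ∪ C) ∈ F := by
    refine hF.mem_of_forall_compatible (union_subset (hF.1.1 _ hPF).1 (hG.1 _ hNG).1)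
      ⟨b, mem_union_left _ hbP⟩ fun Q hQ => ?_
    obtain rfl | hQP := eq_or_ne Q (A ∪ B)
    · exact (compatible_of_subset subset_union_left).symm
    · exact ((hF.1.2.1 Q hQ _ hPF).union_right (h.compatible_union_right hG hQ hQP)
        ⟨b, mem_inter.mpr ⟨hbP, hbN⟩⟩).symm
  refine ⟨hRF, (ssubset_iff_of_subset subset_union_left).mpr
    ⟨c, mem_union_right _ (mem_union_right _ hc),
      disjoint_right.mp (disjoint_union_left.mpr ⟨hAC, hBC⟩) hc⟩,
    fun Q hQ hPQ => ?_⟩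
  rcases (h.compatible_union_right hG hQ hPQ.ne').subset_or_subset
    ⟨b, mem_inter.mpr ⟨hPQ.subset hbP, hbN⟩⟩ with hQsN | hNsQ
  · exact (hPN.2.1 (hPQ.subset.trans hQsN)).elim
  · exact union_subset hPQ.subset hNsQ

theorem isNNIMove (hF : Nondeg S F) (hG : IsHierarchy S G) (h : IsNNITriple F G A B C) :
    IsNNIMove F G := by
  refine ⟨A, A ∪ B, A ∪ B ∪ (B ∪ C), h.1.1, h.isParent_left hF hG, h.isParent_union hF hG, ?_⟩
  have hRA : (A ∪ B ∪ (B ∪ C)) \ A = B ∪ C := by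
    obtain ⟨hAB, -, hAC⟩ := h.pairwise_disjoint hF hG
    rw [union_assoc, union_eq_right.mpr subset_union_left, union_sdiff_left,
      sdiff_eq_self_of_disjoint (disjoint_union_left.mpr ⟨hAB.symm, hAC.symm⟩)]
  rw [hRA]
  exact (sdiff_eq_singleton_and_sdiff_eq_singleton_iff (mem_sdiff.mp h.union_mem_sdiff_left).1
    (mem_sdiff.mp h.union_mem_sdiff_right).2).mp h.2.2.2

end IsNNITriple

theorem nni_edge_iff_unique_triplet (S : Finset α) (F G : Finset (Finset α))
    (hF : Nondeg S F) (hG : Nondeg S G) :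
    IsNNIMove F G ↔
      ∃! t : Finset α × Finset α × Finset α,
        (t.1 ∈ F ∧ t.1 ∈ G) ∧ (t.2.1 ∈ F ∧ t.2.1 ∈ G) ∧ (t.2.2 ∈ F ∧ t.2.2 ∈ G) ∧
        F \ G = {t.1 ∪ t.2.1} ∧ G \ F = {t.2.1 ∪ t.2.2} := by
  change IsNNIMove F G ↔ ∃! t : Finset α × Finset α × Finset α, IsNNITriple F G t.1 t.2.1 t.2.2
  constructor
  · rintro ⟨C, P, R, hC, hCP, hPR, rfl⟩
    have h := isNNITriple_insert_erase hF hC hCP hPR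
    exact ⟨(C, P \ C, R \ P), h, fun _ ht => h.unique hF hG.1 ht⟩
  · rintro ⟨⟨A, B, C⟩, h, -⟩
    exact h.isNNIMove hF hG.1

end TreeDist
end

section
/- Let S be a finite set and K ⊆ S with |K| ≥ 2. Then the image of the set of nondegenerate hierarchies over S under the restriction map 𝒜 ↦ 𝒜|_K := {A∩K : A ∈ 𝒜, A∩K ≠ ∅} is exactly the set of nondegenerate hierarchies over K; in particular, the restriction of any nondegenerate hierarchy over S to K is a nondegenerate hierarchy over K, and every nondegenerate hierarchy over K arises as such a restriction. -/
open scoped Classical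

namespace TreeDist

variable {α : Type*} [DecidableEq α]

/-! Nondegenerate hierarchies are exactly the binary ones, in which every cluster with at least
two points is the disjoint union of two clusters. Splitting a hierarchy at a child `B` of the
root into the clusters inside `B` and those inside `S \ B` shows by induction that it has at
most `2|S| - 1` clusters, with equality exactly in the binary case. Binarity survives
restriction: a smallest cluster with a given trace on `K` splits into two clusters, and both
must meet `K`, for otherwise the other one would be a smaller cluster with the same trace.
Conversely, a nondegenerate hierarchy over `K` extends to `S` by adding the missing points one
at a time, each as a leaf hanging off a new root. -/

lemma mem_restrictFam {F : Finset (Finset α)} {K A' : Finset α} :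
    A' ∈ restrictFam F K ↔ A'.Nonempty ∧ ∃ A ∈ F, A ∩ K = A' := by
  simp only [restrictFam, Finset.mem_filter, Finset.mem_image]
  tauto

lemma restrictFam_insert (A K : Finset α) (F : Finset (Finset α)) :
    restrictFam (insert A F) K =
      if (A ∩ K).Nonempty then insert (A ∩ K) (restrictFam F K) else restrictFam F K := by
  simp only [restrictFam, Finset.image_insert, Finset.filter_insert]

lemma restrictFam_eq_self {K : Finset α} {G : Finset (Finset α)} (hG : IsHierarchy K G) :
    restrictFam G K = G := by
  ext A
  rw [mem_restrictFam]
  constructor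
  · rintro ⟨-, B, hB, rfl⟩
    rwa [Finset.inter_eq_left.mpr (hG.1 B hB).1]
  · exact fun hA => ⟨(hG.1 A hA).2, A, hA, Finset.inter_eq_left.mpr (hG.1 A hA).1⟩

lemma Compatible.inter_right {A B : Finset α} (h : Compatible A B) (K : Finset α) :
    Compatible (A ∩ K) (B ∩ K) := by
  rcases h with h | h | h
  · left
    rw [Finset.inter_inter_inter_comm, h, Finset.empty_inter]
  · exact Or.inr (Or.inl (Finset.inter_subset_inter h subset_rfl))
  · exact Or.inr (Or.inr (Finset.inter_subset_inter h subset_rfl))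

section Hierarchy

variable {S : Finset α} {F : Finset (Finset α)}

lemma IsHierarchy.restrictFam {K : Finset α} (hF : IsHierarchy S F) (hKS : K ⊆ S)
    (hK : K.Nonempty) : IsHierarchy K (restrictFam F K) := by
  obtain ⟨-, hlam, hSF, hsing⟩ := hF
  refine ⟨fun A' hA' => ?_, fun A' hA' B' hB' => ?_, ?_, fun i hi => ?_⟩
  · obtain ⟨hne, A, -, rfl⟩ := mem_restrictFam.mp hA'
    exact ⟨Finset.inter_subset_right, hne⟩
  · obtain ⟨-, A, hA, rfl⟩ := mem_restrictFam.mp hA'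
    obtain ⟨-, B, hB, rfl⟩ := mem_restrictFam.mp hB'
    exact (hlam A hA B hB).inter_right K
  · exact mem_restrictFam.mpr ⟨hK, S, hSF, Finset.inter_eq_right.mpr hKS⟩
  · refine mem_restrictFam.mpr ⟨Finset.singleton_nonempty i, {i}, hsing i (hKS hi), ?_⟩
    exact Finset.inter_eq_left.mpr (Finset.singleton_subset_iff.mpr hi)

lemma IsHierarchy.insert_filter_subset {T : Finset α} (hF : IsHierarchy S F) (hTS : T ⊆ S)
    (hT : T.Nonempty) : IsHierarchy T (insert T (F.filter (· ⊆ T))) := by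
  obtain ⟨hsub, hlam, -, hsing⟩ := hF
  have mem : ∀ A ∈ insert T (F.filter (· ⊆ T)), A = T ∨ A ∈ F ∧ A ⊆ T := by simp
  refine ⟨fun A hA => ?_, fun A hA B hB => ?_, Finset.mem_insert_self _ _, fun i hi => ?_⟩
  · rcases mem A hA with rfl | ⟨hAF, hAT⟩
    exacts [⟨subset_rfl, hT⟩, ⟨hAT, (hsub A hAF).2⟩]
  · rcases mem A hA with rfl | ⟨hAF, hAT⟩ <;> rcases mem B hB with rfl | ⟨hBF, hBT⟩
    exacts [Or.inr (Or.inl subset_rfl), Or.inr (Or.inr hBT), Or.inr (Or.inl hAT),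
      hlam A hAF B hBF]
  · exact Finset.mem_insert_of_mem
      (Finset.mem_filter.mpr ⟨hsing i (hTS hi), Finset.singleton_subset_iff.mpr hi⟩)

lemma IsHierarchy.filter_subset {T : Finset α} (hF : IsHierarchy S F) (hT : T ∈ F) :
    IsHierarchy T (F.filter (· ⊆ T)) := by
  have h := hF.insert_filter_subset (hF.1 T hT).1 (hF.1 T hT).2
  rwa [Finset.insert_eq_of_mem (Finset.mem_filter.mpr ⟨hT, subset_rfl⟩ :
    T ∈ F.filter (· ⊆ T))] at h

lemma IsHierarchy.exists_isParent_self (hF : IsHierarchy S F) (hS : 1 < S.card) :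
    ∃ B ∈ F, IsParent F B S := by
  obtain ⟨i, hi⟩ : S.Nonempty := Finset.card_pos.mp (by omega)
  have hiS : {i} ⊂ S := Finset.ssubset_iff_subset_ne.mpr
    ⟨Finset.singleton_subset_iff.mpr hi, fun h => by simp [← h] at hS⟩
  obtain ⟨B, hB, hmax⟩ := Finset.exists_max_image (F.filter (· ⊂ S)) Finset.card
    ⟨{i}, Finset.mem_filter.mpr ⟨hF.2.2.2 i hi, hiS⟩⟩
  obtain ⟨hBF, hBS⟩ := Finset.mem_filter.mp hB
  refine ⟨B, hBF, hF.2.2.1, hBS, fun Q hQ hBQ => ?_⟩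
  by_contra hSQ
  have hQS : Q ⊂ S := Finset.ssubset_iff_subset_ne.mpr ⟨(hF.1 Q hQ).1, fun h => hSQ h.ge⟩
  exact (Finset.card_lt_card hBQ).not_ge (hmax Q (Finset.mem_filter.mpr ⟨hQ, hQS⟩))

lemma IsHierarchy.eq_or_subset_or_subset_sdiff {A B : Finset α} (hF : IsHierarchy S F)
    (hB : B ∈ F) (hBS : IsParent F B S) (hA : A ∈ F) : A = S ∨ A ⊆ B ∨ A ⊆ S \ B := by
  rcases hF.2.1 A hA B hB with h | h | h
  · exact Or.inr (Or.inr (Finset.subset_sdiff.mpr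
      ⟨(hF.1 A hA).1, Finset.disjoint_iff_inter_eq_empty.mpr h⟩))
  · exact Or.inr (Or.inl h)
  · rcases h.eq_or_ssubset with rfl | h
    · exact Or.inr (Or.inl subset_rfl)
    · exact Or.inl ((hF.1 A hA).1.antisymm (hBS.2.2 A hA h))

lemma IsHierarchy.card_eq_of_isParent {B : Finset α} (hF : IsHierarchy S F) (hB : B ∈ F)
    (hBS : IsParent F B S) :
    F.card = (F.filter (· ⊆ B)).card + (F.filter (· ⊆ S \ B)).card + 1 := by
  have not_both : ∀ A ∈ F, A ⊆ B → ¬ A ⊆ S \ B := fun A hA hAB hAC =>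
    (hF.1 A hA).2.ne_empty (disjoint_self.mp (Finset.disjoint_sdiff.mono hAB hAC))
  have hsplit : F = insert S (F.filter (· ⊆ B) ∪ F.filter (· ⊆ S \ B)) := by
    ext A
    simp only [Finset.mem_insert, Finset.mem_union, Finset.mem_filter]
    constructor
    · intro hA
      have := hF.eq_or_subset_or_subset_sdiff hB hBS hA
      tauto
    · rintro (rfl | ⟨hA, -⟩ | ⟨hA, -⟩)
      exacts [hF.2.2.1, hA, hA]
  have hS : S ∉ F.filter (· ⊆ B) ∪ F.filter (· ⊆ S \ B) := by
    simp only [Finset.mem_union, Finset.mem_filter, not_or, not_and]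
    exact ⟨fun _ => hBS.2.1.not_subset,
      fun hSF hSC => not_both B hB subset_rfl (hBS.2.1.subset.trans hSC)⟩
  conv_lhs => rw [hsplit]
  rw [Finset.card_insert_of_notMem hS,
    Finset.card_union_of_disjoint (Finset.disjoint_filter.mpr not_both)]

theorem IsHierarchy.card_le (hF : IsHierarchy S F) : F.card ≤ 2 * S.card - 1 := by
  induction S using Finset.strongInduction generalizing F with
  | H S ih =>
  rcases Nat.lt_or_ge 1 S.card with hS | hS
  · obtain ⟨B, hB, hBS⟩ := hF.exists_isParent_self hS
    have hBne := (hF.1 B hB).2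
    have hCne : (S \ B).Nonempty := Finset.sdiff_nonempty.mpr hBS.2.1.not_subset
    have hFB := ih B hBS.2.1 (hF.filter_subset hB)
    have hFC := ih (S \ B) (Finset.sdiff_ssubset hBS.2.1.subset hBne)
      (hF.insert_filter_subset Finset.sdiff_subset hCne)
    have := Finset.card_le_card (Finset.subset_insert (S \ B) (F.filter (· ⊆ S \ B)))
    have := Finset.card_sdiff_add_card_eq_card hBS.2.1.subset
    have := hBne.card_pos
    have := hCne.card_pos
    rw [hF.card_eq_of_isParent hB hBS]
    omega
  · have hF1 : F ⊆ {S} := fun A hA => Finset.mem_singleton.mpr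
      (Finset.eq_of_subset_of_card_le (hF.1 A hA).1 (hS.trans (hF.1 A hA).2.card_pos))
    have := Finset.card_le_card hF1
    have := (hF.1 S hF.2.2.1).2.card_pos
    rw [Finset.card_singleton] at *
    omega

lemma IsHierarchy.isParent_of_disjoint_union {B C : Finset α} (hF : IsHierarchy S F)
    (hB : B ∈ F) (hC : C ∈ F) (hBC : Disjoint B C) (hS : B ∪ C = S) : IsParent F B S := by
  have hBne := (hF.1 B hB).2
  have hCne := (hF.1 C hC).2
  refine ⟨hF.2.2.1, ?_, fun Q hQ hBQ => ?_⟩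
  · refine Finset.ssubset_iff_subset_ne.mpr ⟨hS ▸ Finset.subset_union_left, fun h => ?_⟩
    have := Finset.card_union_of_disjoint hBC
    rw [hS, ← h] at this
    have := hCne.card_pos
    omega
  · rcases hF.2.1 Q hQ C hC with h | h | h
    · have hQB : Q ⊆ B := Disjoint.left_le_of_le_sup_right ((hF.1 Q hQ).1.trans hS.ge)
        (Finset.disjoint_iff_inter_eq_empty.mpr h)
      exact absurd hQB hBQ.not_subset
    · exact absurd (hBC.mono_right h) (Finset.not_disjoint_iff_nonempty_inter.mpr
        (by rwa [Finset.inter_eq_left.mpr hBQ.subset]))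
    · exact hS ▸ Finset.union_subset hBQ.subset h

end Hierarchy

def IsBinary (S : Finset α) (F : Finset (Finset α)) : Prop :=
  IsHierarchy S F ∧
    ∀ A ∈ F, 1 < A.card → ∃ B ∈ F, ∃ C ∈ F, Disjoint B C ∧ B ∪ C = A

section Binary

variable {S : Finset α} {F : Finset (Finset α)}

lemma IsBinary.filter_subset {T : Finset α} (hF : IsBinary S F) (hT : T ∈ F) :
    IsBinary T (F.filter (· ⊆ T)) := by
  refine ⟨hF.1.filter_subset hT, fun A hA hA2 => ?_⟩
  obtain ⟨hAF, hAT⟩ := Finset.mem_filter.mp hA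
  obtain ⟨B, hB, C, hC, hBC, rfl⟩ := hF.2 A hAF hA2
  exact ⟨B, Finset.mem_filter.mpr ⟨hB, Finset.subset_union_left.trans hAT⟩,
    C, Finset.mem_filter.mpr ⟨hC, Finset.subset_union_right.trans hAT⟩, hBC, rfl⟩

theorem IsBinary.nondeg (hF : IsBinary S F) : Nondeg S F := by
  refine ⟨hF.1, ?_⟩
  induction S using Finset.strongInduction generalizing F with
  | H S ih =>
  rcases Nat.lt_or_ge 1 S.card with hS | hS
  · obtain ⟨B, hB, C, hC, hBC, hBCS⟩ := hF.2 S hF.1.2.2.1 hS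
    have hBS := hF.1.isParent_of_disjoint_union hB hC hBC hBCS
    obtain rfl : C = S \ B := by rw [← hBCS, Finset.union_sdiff_left, hBC.symm.sdiff_eq_left]
    have hFB := ih B hBS.2.1 (hF.filter_subset hB)
    have hFC := ih (S \ B) (Finset.sdiff_ssubset hBS.2.1.subset (hF.1.1 B hB).2)
      (hF.filter_subset hC)
    have := Finset.card_sdiff_add_card_eq_card hBS.2.1.subset
    have := (hF.1.1 B hB).2.card_pos
    have := (hF.1.1 _ hC).2.card_pos
    rw [hF.1.card_eq_of_isParent hB hBS]
    omega
  · have := hF.1.card_le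
    have := Finset.card_pos.mpr ⟨S, hF.1.2.2.1⟩
    omega

theorem Nondeg.isBinary (hF : Nondeg S F) : IsBinary S F := by
  induction S using Finset.strongInduction generalizing F with
  | H S ih =>
  obtain ⟨hH, hcard⟩ := hF
  refine ⟨hH, fun A hA hA2 => ?_⟩
  obtain ⟨B, hB, hBS⟩ := hH.exists_isParent_self
    (hA2.trans_le (Finset.card_le_card (hH.1 A hA).1))
  have hBne := (hH.1 B hB).2
  have hCne : (S \ B).Nonempty := Finset.sdiff_nonempty.mpr hBS.2.1.not_subset
  have hFB := (hH.filter_subset hB).card_le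
  have hFC := (hH.insert_filter_subset Finset.sdiff_subset hCne).card_le
  have := Finset.card_sdiff_add_card_eq_card hBS.2.1.subset
  have hdecomp := hH.card_eq_of_isParent hB hBS
  have := hBne.card_pos
  have := hCne.card_pos
  -- `F` attains the bound only if `S \ B` is a cluster and both halves attain theirs
  have hCF : S \ B ∈ F := by
    by_contra hCF
    rw [Finset.card_insert_of_notMem fun h => hCF (Finset.mem_filter.mp h).1] at hFC
    omega
  rw [Finset.insert_eq_of_mem (Finset.mem_filter.mpr ⟨hCF, subset_rfl⟩ :
    S \ B ∈ F.filter (· ⊆ S \ B))] at hFC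
  have hBbin := ih B hBS.2.1 ⟨hH.filter_subset hB, by omega⟩
  have hCbin := ih (S \ B) (Finset.sdiff_ssubset hBS.2.1.subset hBne)
    ⟨hH.filter_subset hCF, by omega⟩
  rcases hH.eq_or_subset_or_subset_sdiff hB hBS hA with rfl | hAT
  · exact ⟨B, hB, _, hCF, Finset.disjoint_sdiff, Finset.union_sdiff_of_subset hBS.2.1.subset⟩
  obtain ⟨T, hT, hAT⟩ : ∃ T, IsBinary T (F.filter (· ⊆ T)) ∧ A ⊆ T := by
    rcases hAT with hAB | hAC
    exacts [⟨B, hBbin, hAB⟩, ⟨S \ B, hCbin, hAC⟩]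
  obtain ⟨B', hB', C', hC', hBC', hBCA⟩ := hT.2 A (Finset.mem_filter.mpr ⟨hA, hAT⟩) hA2
  exact ⟨B', (Finset.mem_filter.mp hB').1, C', (Finset.mem_filter.mp hC').1, hBC', hBCA⟩

theorem IsBinary.restrictFam {K : Finset α} (hF : IsBinary S F) (hKS : K ⊆ S)
    (hK : K.Nonempty) : IsBinary K (restrictFam F K) := by
  refine ⟨hF.1.restrictFam hKS hK, fun A' hA' hA'2 => ?_⟩
  obtain ⟨-, A₀, hA₀, hA₀K⟩ := mem_restrictFam.mp hA'
  obtain ⟨A, hA, hmin⟩ := Finset.exists_min_image (F.filter (· ∩ K = A')) Finset.card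
    ⟨A₀, Finset.mem_filter.mpr ⟨hA₀, hA₀K⟩⟩
  obtain ⟨hAF, hAK⟩ := Finset.mem_filter.mp hA
  have hA2 : 1 < A.card := hA'2.trans_le (hAK ▸ Finset.card_le_card Finset.inter_subset_left)
  obtain ⟨B, hB, C, hC, hBC, hBCA⟩ := hF.2 A hAF hA2
  have meets : ∀ D ∈ F, ∀ E ∈ F, Disjoint D E → D ∪ E = A → (E ∩ K).Nonempty := by
    intro D hD E hE hDE hDEA
    by_contra hEK
    rw [Finset.not_nonempty_iff_eq_empty] at hEK
    have hDK : D ∩ K = A' := by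
      rw [← hAK, ← hDEA, Finset.union_inter_distrib_right, hEK, Finset.union_empty]
    have := hmin D (Finset.mem_filter.mpr ⟨hD, hDK⟩)
    have := Finset.card_union_of_disjoint hDE
    have := (hF.1.1 E hE).2.card_pos
    rw [hDEA] at *
    omega
  have hBK := meets C hC B hB hBC.symm (Finset.union_comm C B ▸ hBCA)
  have hCK := meets B hB C hC hBC hBCA
  exact ⟨B ∩ K, mem_restrictFam.mpr ⟨hBK, B, hB, rfl⟩,
    C ∩ K, mem_restrictFam.mpr ⟨hCK, C, hC, rfl⟩,
    hBC.mono Finset.inter_subset_left Finset.inter_subset_left,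
    by rw [← Finset.union_inter_distrib_right, hBCA, hAK]⟩

end Binary

section Extension

variable {S : Finset α} {F : Finset (Finset α)} {x : α}

theorem Nondeg.graft (hF : Nondeg S F) (hx : x ∉ S) :
    Nondeg (insert x S) (insert (insert x S) (insert {x} F)) := by
  obtain ⟨⟨hsub, hlam, hSF, hsing⟩, hcard⟩ := hF
  have hxF : ∀ A ∈ F, x ∉ A := fun A hA hxA => hx ((hsub A hA).1 hxA)
  have hsub' : ∀ A ∈ insert (insert x S) (insert {x} F),
      A ⊆ insert x S ∧ A.Nonempty := by
    simp only [Finset.forall_mem_insert]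
    exact ⟨⟨subset_rfl, Finset.insert_nonempty x S⟩,
      ⟨by simp, Finset.singleton_nonempty x⟩,
      fun A hA => ⟨(hsub A hA).1.trans (Finset.subset_insert x S), (hsub A hA).2⟩⟩
  refine ⟨⟨hsub', fun A hA B hB => ?_, Finset.mem_insert_self _ _, fun i hi => ?_⟩, ?_⟩
  · rcases Finset.mem_insert.mp hA with rfl | hA'
    · exact Or.inr (Or.inr (hsub' B hB).1)
    rcases Finset.mem_insert.mp hB with rfl | hB'
    · exact Or.inr (Or.inl (hsub' A hA).1)
    rcases Finset.mem_insert.mp hA' with rfl | hA'' <;>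
      rcases Finset.mem_insert.mp hB' with rfl | hB''
    exacts [Or.inr (Or.inl subset_rfl), Or.inl (Finset.singleton_inter_of_notMem (hxF B hB'')),
      Or.inl (Finset.inter_singleton_of_notMem (hxF A hA'')), hlam A hA'' B hB'']
  · rcases Finset.mem_insert.mp hi with rfl | hi
    · simp
    · exact Finset.mem_insert_of_mem (Finset.mem_insert_of_mem (hsing i hi))
  · have hSne := (hsub S hSF).2
    have hxS : insert x S ∉ insert {x} F := by
      rw [Finset.mem_insert, not_or]
      refine ⟨fun h => ?_, fun h => hxF _ h (Finset.mem_insert_self x S)⟩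
      have := congrArg Finset.card h
      rw [Finset.card_insert_of_notMem hx, Finset.card_singleton] at this
      exact hSne.card_pos.ne' (by omega)
    rw [Finset.card_insert_of_notMem hxS,
      Finset.card_insert_of_notMem fun h => hxF _ h (Finset.mem_singleton_self x), hcard,
      Finset.card_insert_of_notMem hx]
    have := hSne.card_pos
    omega

lemma restrictFam_graft {K : Finset α} (hSF : S ∈ F) (hKS : K ⊆ S) (hK : K.Nonempty)
    (hxK : x ∉ K) : restrictFam (insert (insert x S) (insert {x} F)) K = restrictFam F K := by
  have hKmem : K ∈ restrictFam F K :=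
    mem_restrictFam.mpr ⟨hK, S, hSF, Finset.inter_eq_right.mpr hKS⟩
  rw [restrictFam_insert, restrictFam_insert, Finset.singleton_inter_of_notMem hxK,
    Finset.inter_eq_right.mpr (hKS.trans (Finset.subset_insert x S))]
  simp [hK, Finset.insert_eq_of_mem hKmem]

theorem Nondeg.exists_restrictFam_eq {K : Finset α} {G : Finset (Finset α)} (hG : Nondeg K G)
    (hKS : K ⊆ S) : ∃ F, Nondeg S F ∧ restrictFam F K = G := by
  have hK : K.Nonempty := (hG.1.1 K hG.1.2.2.1).2
  obtain ⟨T, hTK, rfl⟩ : ∃ T, Disjoint T K ∧ S = T ∪ K :=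
    ⟨S \ K, Finset.sdiff_disjoint, (Finset.sdiff_union_of_subset hKS).symm⟩
  clear hKS
  induction T using Finset.induction_on with
  | empty => exact ⟨G, by rwa [Finset.empty_union], restrictFam_eq_self hG.1⟩
  | insert y T hyT ih =>
    rw [Finset.disjoint_insert_left] at hTK
    obtain ⟨F, hF, hFG⟩ := ih hTK.2
    refine ⟨insert (insert y (T ∪ K)) (insert {y} F), ?_, ?_⟩
    · rw [Finset.insert_union]
      exact hF.graft (by simp [hyT, hTK.1])
    · rw [restrictFam_graft hF.1.2.2.1 Finset.subset_union_right hK hTK.1, hFG]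

end Extension

theorem restriction_of_nondeg (S K : Finset α) (hKS : K ⊆ S) (hK : 2 ≤ K.card) :
    (∀ F : Finset (Finset α), Nondeg S F → Nondeg K (restrictFam F K)) ∧
    (∀ G : Finset (Finset α), Nondeg K G →
      ∃ F : Finset (Finset α), Nondeg S F ∧ restrictFam F K = G) := by
  have hKne : K.Nonempty := Finset.card_pos.mp (by omega)
  exact ⟨fun F hF => (hF.isBinary.restrictFam hKS hKne).nondeg,
    fun G hG => hG.exists_restrictFam_eq hKS⟩

end TreeDist
end

section
/- Let 𝒜 be a hierarchy over a finite set S and let h : 𝒜 → ℝ≥0. Define d(i,j) = h(ca(i,j)) for i,j ∈ S, where ca(i,j) is the smallest cluster of 𝒜 containing both i and j. Then d is an ultrametric on S (that is, d is nonnegative, symmetric, d(i,j) = 0 iff i = j, and d(i,j) ≤ max(d(i,k), d(k,j)) for all i,j,k ∈ S) if and only if both of the following hold for all clusters I, J ∈ 𝒜: (i) if I ⊆ J then h(I) ≤ h(J), and (ii) h(I) = 0 if and only if |I| = 1. -/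
open scoped Classical

namespace TreeDist

variable {α : Type*} [DecidableEq α]

/-!
In a laminar family two clusters sharing a point are nested, so `ca i j` lies inside every
cluster containing `i` and `j`. Hence `ca i k` and `ca k j` are nested, the larger one contains
`i` and `j`, and monotonicity of `h` gives the ultrametric inequality. Conversely, if `I ⊊ J` are
clusters, a point `l` of `J` outside the child of `J` containing `I` satisfies `ca x l = J` for
all `x ∈ I`. Writing `I = ca i j` with `i, j ∈ I` (`j = i` if `I = {i}`, otherwise `j` comes
from the same construction applied to `{i} ⊊ I`), the ultrametric inequality at `l` gives
`h I ≤ max (h J) (h J)`.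
-/

def IsSmallestCommonAncestor (F : Finset (Finset α)) (i j : α) (C : Finset α) : Prop :=
  C ∈ F ∧ i ∈ C ∧ j ∈ C ∧ ∀ A ∈ F, i ∈ A → j ∈ A → C.card ≤ A.card

def IsUltrametricOn (S : Finset α) (d : α → α → ℝ) : Prop :=
  (∀ i ∈ S, ∀ j ∈ S, 0 ≤ d i j) ∧
  (∀ i ∈ S, ∀ j ∈ S, d i j = d j i) ∧
  (∀ i ∈ S, ∀ j ∈ S, (d i j = 0 ↔ i = j)) ∧
  (∀ i ∈ S, ∀ j ∈ S, ∀ k ∈ S, d i j ≤ max (d i k) (d k j))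

section

variable {S A B I J C : Finset α} {F : Finset (Finset α)} {ca : α → α → Finset α} {i j : α}

lemma Compatible.subset_or_subset_s2 (hAB : Compatible A B) (hA : i ∈ A) (hB : i ∈ B) :
    A ⊆ B ∨ B ⊆ A := by
  rcases hAB with hdisj | hAB | hBA
  · exact absurd (Finset.mem_inter.mpr ⟨hA, hB⟩) (by simp [hdisj])
  · exact Or.inl hAB
  · exact Or.inr hBA

lemma IsSmallestCommonAncestor.subset (hlam : ∀ A ∈ F, ∀ B ∈ F, Compatible A B)
    (hC : IsSmallestCommonAncestor F i j C) (hA : A ∈ F) (hiA : i ∈ A) (hjA : j ∈ A) :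
    C ⊆ A := by
  obtain ⟨hCF, hiC, -, hmin⟩ := hC
  rcases (hlam C hCF A hA).subset_or_subset_s2 hiC hiA with hCA | hAC
  · exact hCA
  · exact (Finset.eq_of_subset_of_card_le hAC (hmin A hA hiA hjA)).symm.subset

/-- Witness: any `l ∈ J \ C`, where `C` is a largest cluster with `I ⊆ C ⊂ J`
(the child of `J` containing `I`). -/
lemma exists_mem_forall_superset_of_ssubset (hlam : ∀ A ∈ F, ∀ B ∈ F, Compatible A B)
    (hI : I ∈ F) (hJ : J ∈ F) (hIJ : I ⊂ J) :
    ∃ l ∈ J, ∀ A ∈ F, l ∈ A → (A ∩ I).Nonempty → J ⊆ A := by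
  set T := F.filter fun A => I ⊆ A ∧ A ⊂ J
  obtain ⟨C, hCT, hCmax⟩ := T.exists_max_image Finset.card ⟨I, by simp [T, hI, hIJ]⟩
  obtain ⟨hCF, hIC, hCJ⟩ : C ∈ F ∧ I ⊆ C ∧ C ⊂ J := by simpa [T, and_assoc] using hCT
  obtain ⟨l, hlJ, hlC⟩ := Finset.exists_of_ssubset hCJ
  refine ⟨l, hlJ, fun A hA hlA ⟨x, hx⟩ => ?_⟩
  have hxC : x ∈ C := hIC (Finset.mem_inter.mp hx).2
  have hCA : C ⊆ A :=
    ((hlam A hA C hCF).subset_or_subset_s2 (Finset.mem_inter.mp hx).1 hxC).resolve_left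
      fun hAC => hlC (hAC hlA)
  rcases (hlam J hJ A hA).subset_or_subset_s2 hlJ hlA with hJA | hAJ
  · exact hJA
  rcases eq_or_ne A J with rfl | hne
  · exact subset_rfl
  have hAT : A ∈ T := by simp [T, hA, hIC.trans hCA, hAJ.ssubset_of_ne hne]
  rw [Finset.eq_of_subset_of_card_le hCA (hCmax A hAT)] at hlC
  exact absurd hlA hlC

lemma ca_comm (hF : IsHierarchy S F)
    (hca : ∀ i ∈ S, ∀ j ∈ S, IsSmallestCommonAncestor F i j (ca i j)) (hi : i ∈ S) (hj : j ∈ S) :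
    ca i j = ca j i := by
  obtain ⟨hjiF, hjji, hiji, -⟩ := hca j hj i hi
  obtain ⟨hijF, hiij, hjij, -⟩ := hca i hi j hj
  exact ((hca i hi j hj).subset hF.2.1 hjiF hiji hjji).antisymm
    ((hca j hj i hi).subset hF.2.1 hijF hjij hiij)

lemma ca_self (hF : IsHierarchy S F)
    (hca : ∀ i ∈ S, ∀ j ∈ S, IsSmallestCommonAncestor F i j (ca i j)) (hi : i ∈ S) :
    ca i i = {i} :=
  ((hca i hi i hi).subset hF.2.1 (hF.2.2.2 i hi) (Finset.mem_singleton_self i)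
    (Finset.mem_singleton_self i)).antisymm (Finset.singleton_subset_iff.mpr (hca i hi i hi).2.1)

lemma card_ca_eq_one_iff (hF : IsHierarchy S F)
    (hca : ∀ i ∈ S, ∀ j ∈ S, IsSmallestCommonAncestor F i j (ca i j)) (hi : i ∈ S) (hj : j ∈ S) :
    (ca i j).card = 1 ↔ i = j := by
  refine ⟨fun h1 => Finset.card_le_one.mp h1.le i (hca i hi j hj).2.1 j (hca i hi j hj).2.2.1,
    ?_⟩
  rintro rfl
  rw [ca_self hF hca hi, Finset.card_singleton]

lemma exists_ca_eq_of_ssubset (hF : IsHierarchy S F)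
    (hca : ∀ i ∈ S, ∀ j ∈ S, IsSmallestCommonAncestor F i j (ca i j))
    (hI : I ∈ F) (hJ : J ∈ F) (hIJ : I ⊂ J) :
    ∃ l ∈ J, ∀ x ∈ I, ca x l = J := by
  obtain ⟨l, hlJ, hsub⟩ := exists_mem_forall_superset_of_ssubset hF.2.1 hI hJ hIJ
  refine ⟨l, hlJ, fun x hx => ?_⟩
  have hxS : x ∈ S := (hF.1 I hI).1 hx
  have hlS : l ∈ S := (hF.1 J hJ).1 hlJ
  obtain ⟨hcaF, hxca, hlca, -⟩ := hca x hxS l hlS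
  exact ((hca x hxS l hlS).subset hF.2.1 hJ (hIJ.1 hx) hlJ).antisymm
    (hsub _ hcaF hlca ⟨x, Finset.mem_inter.mpr ⟨hxca, hx⟩⟩)

lemma exists_ca_eq (hF : IsHierarchy S F)
    (hca : ∀ i ∈ S, ∀ j ∈ S, IsSmallestCommonAncestor F i j (ca i j)) (hI : I ∈ F) (hi : i ∈ I) :
    ∃ j ∈ I, ca i j = I := by
  have hiS : i ∈ S := (hF.1 I hI).1 hi
  by_cases hIi : I = {i}
  · exact ⟨i, hi, hIi ▸ ca_self hF hca hiS⟩
  have hiI : {i} ⊂ I := (Finset.singleton_subset_iff.mpr hi).ssubset_of_ne (Ne.symm hIi)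
  obtain ⟨j, hjI, hca_eq⟩ := exists_ca_eq_of_ssubset hF hca (hF.2.2.2 i hiS) hI hiI
  exact ⟨j, hjI, hca_eq i (Finset.mem_singleton_self i)⟩

lemma monotone_of_isUltrametricOn (hF : IsHierarchy S F)
    (hca : ∀ i ∈ S, ∀ j ∈ S, IsSmallestCommonAncestor F i j (ca i j)) {h : Finset α → ℝ}
    (hd : IsUltrametricOn S fun i j => h (ca i j)) :
    ∀ I ∈ F, ∀ J ∈ F, I ⊆ J → h I ≤ h J := by
  intro I hI J hJ hIJ
  rcases eq_or_ne I J with rfl | hne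
  · exact le_rfl
  obtain ⟨i, hi⟩ := (hF.1 I hI).2
  obtain ⟨j, hj, hij⟩ := exists_ca_eq hF hca hI hi
  obtain ⟨l, hlJ, hl⟩ := exists_ca_eq_of_ssubset hF hca hI hJ (hIJ.ssubset_of_ne hne)
  have hS : I ⊆ S := (hF.1 I hI).1
  have hlS : l ∈ S := (hF.1 J hJ).1 hlJ
  have hlj : h (ca l j) = h (ca j l) := hd.2.1 l hlS j (hS hj)
  -- `J` is the common ancestor of `l` with both `i` and `j`: the ultrametric inequality at `l`
  calc h I = h (ca i j) := by rw [hij]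
    _ ≤ max (h (ca i l)) (h (ca l j)) := hd.2.2.2 i (hS hi) j (hS hj) l hlS
    _ = h J := by rw [hlj, hl i hi, hl j hj, max_self]

lemma eq_zero_iff_card_eq_one_of_isUltrametricOn (hF : IsHierarchy S F)
    (hca : ∀ i ∈ S, ∀ j ∈ S, IsSmallestCommonAncestor F i j (ca i j)) {h : Finset α → ℝ}
    (hd : IsUltrametricOn S fun i j => h (ca i j)) :
    ∀ I ∈ F, h I = 0 ↔ I.card = 1 := by
  intro I hI
  obtain ⟨i, hi⟩ := (hF.1 I hI).2
  obtain ⟨j, hj, hij⟩ := exists_ca_eq hF hca hI hi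
  have hS : I ⊆ S := (hF.1 I hI).1
  rw [← hij, hd.2.2.1 i (hS hi) j (hS hj), card_ca_eq_one_iff hF hca (hS hi) (hS hj)]

lemma isUltrametricOn_of_monotone (hF : IsHierarchy S F)
    (hca : ∀ i ∈ S, ∀ j ∈ S, IsSmallestCommonAncestor F i j (ca i j)) {h : Finset α → ℝ}
    (hnn : ∀ A ∈ F, 0 ≤ h A) (hmono : ∀ I ∈ F, ∀ J ∈ F, I ⊆ J → h I ≤ h J)
    (hzero : ∀ I ∈ F, h I = 0 ↔ I.card = 1) :
    IsUltrametricOn S fun i j => h (ca i j) := by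
  refine ⟨fun i hi j hj => hnn _ (hca i hi j hj).1,
    fun i hi j hj => congrArg h (ca_comm hF hca hi hj),
    fun i hi j hj => (hzero _ (hca i hi j hj).1).trans (card_ca_eq_one_iff hF hca hi hj), ?_⟩
  intro i hi j hj k hk
  obtain ⟨hikF, hiik, hkik, -⟩ := hca i hi k hk
  obtain ⟨hkjF, hkkj, hjkj, -⟩ := hca k hk j hj
  -- `ca i k` and `ca k j` share `k`, so the larger of the two contains `i` and `j`
  rcases (hF.2.1 _ hikF _ hkjF).subset_or_subset_s2 hkik hkkj with hsub | hsub
  · exact le_max_of_le_right <|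
      hmono _ (hca i hi j hj).1 _ hkjF ((hca i hi j hj).subset hF.2.1 hkjF (hsub hiik) hjkj)
  · exact le_max_of_le_left <|
      hmono _ (hca i hi j hj).1 _ hikF ((hca i hi j hj).subset hF.2.1 hikF hiik (hsub hjkj))

end

theorem ultrametric_iff (S : Finset α) (F : Finset (Finset α)) (hF : IsHierarchy S F)
    (ca : α → α → Finset α)
    (hca : ∀ i ∈ S, ∀ j ∈ S, ca i j ∈ F ∧ i ∈ ca i j ∧ j ∈ ca i j ∧
      ∀ A ∈ F, i ∈ A → j ∈ A → (ca i j).card ≤ A.card)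
    (h : Finset α → ℝ) (hnn : ∀ A ∈ F, 0 ≤ h A) :
    ((∀ i ∈ S, ∀ j ∈ S, 0 ≤ h (ca i j)) ∧
     (∀ i ∈ S, ∀ j ∈ S, h (ca i j) = h (ca j i)) ∧
     (∀ i ∈ S, ∀ j ∈ S, (h (ca i j) = 0 ↔ i = j)) ∧
     (∀ i ∈ S, ∀ j ∈ S, ∀ k ∈ S, h (ca i j) ≤ max (h (ca i k)) (h (ca k j)))) ↔
    ((∀ I ∈ F, ∀ J ∈ F, I ⊆ J → h I ≤ h J) ∧ (∀ I ∈ F, (h I = 0 ↔ I.card = 1))) :=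
  ⟨fun hd => ⟨monotone_of_isUltrametricOn hF hca hd,
      eq_zero_iff_card_eq_one_of_isUltrametricOn hF hca hd⟩,
    fun ⟨hmono, hzero⟩ => isUltrametricOn_of_monotone hF hca hnn hmono hzero⟩

end TreeDist
end

section
/- Let S be a finite set. The ultrametric representation map 𝒜 ↦ U(𝒜), sending a hierarchy 𝒜 over S to the S×S matrix with entries U(𝒜)_{ij} = |ca(i,j)| − 1, is injective on the set of all hierarchies over S: if 𝒜 ≠ ℬ are hierarchies over S, then U(𝒜) ≠ U(ℬ). -/
open scoped Classical

namespace TreeDist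

variable {α : Type*} [DecidableEq α]

/-! A hierarchy can be read off its ultrametric. A cluster `A ∋ i` is the ball
`{j ∈ S | caCard F i j ≤ |A|}`, and for every `k ≥ 1` this ball is a cluster: the largest one
through `i` of size at most `k` (the clusters through `i` form a chain). So a cluster of one
hierarchy is a ball of the common ultrametric, hence a cluster of the other. -/

lemma caCard_le_card {α : Type*} {F : Finset (Finset α)} {i j : α} {A : Finset α}
    (hA : A ∈ F) (hi : i ∈ A) (hj : j ∈ A) : caCard F i j ≤ A.card :=
  Nat.sInf_le ⟨A, hA, hi, hj, rfl⟩

lemma IsHierarchy.exists_card_eq_caCard {S : Finset α} {F : Finset (Finset α)}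
    (hF : IsHierarchy S F) {i j : α} (hi : i ∈ S) (hj : j ∈ S) :
    ∃ A ∈ F, i ∈ A ∧ j ∈ A ∧ A.card = caCard F i j :=
  Nat.sInf_mem (s := {n | ∃ A ∈ F, i ∈ A ∧ j ∈ A ∧ A.card = n})
    ⟨S.card, S, hF.2.2.1, hi, hj, rfl⟩

lemma Compatible.subset_of_mem_of_card_le {A B : Finset α} (hAB : Compatible A B) {i : α}
    (hiA : i ∈ A) (hiB : i ∈ B) (hcard : A.card ≤ B.card) : A ⊆ B := by
  rcases hAB with hdisj | hsub | hsub
  · exact absurd (Finset.mem_inter.mpr ⟨hiA, hiB⟩) (by simp [hdisj])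
  · exact hsub
  · exact (Finset.eq_of_subset_of_card_le hsub hcard).ge

lemma IsHierarchy.eq_filter_caCard_le {S : Finset α} {F : Finset (Finset α)}
    (hF : IsHierarchy S F) {A : Finset α} (hA : A ∈ F) {i : α} (hi : i ∈ A) :
    A = S.filter fun j => caCard F i j ≤ A.card := by
  ext j
  simp only [Finset.mem_filter]
  constructor
  · intro hj
    exact ⟨(hF.1 A hA).1 hj, caCard_le_card hA hi hj⟩
  · rintro ⟨hjS, hle⟩
    obtain ⟨D, hD, hiD, hjD, hcard⟩ := hF.exists_card_eq_caCard ((hF.1 A hA).1 hi) hjS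
    exact (hF.2.1 D hD A hA).subset_of_mem_of_card_le hiD hi (hcard ▸ hle) hjD

lemma IsHierarchy.filter_caCard_le_mem {S : Finset α} {F : Finset (Finset α)}
    (hF : IsHierarchy S F) {i : α} (hi : i ∈ S) {k : ℕ} (hk : 1 ≤ k) :
    (S.filter fun j => caCard F i j ≤ k) ∈ F := by
  set T := F.filter fun C => i ∈ C ∧ C.card ≤ k
  have hsingleton : {i} ∈ T := by simpa [T, hk] using hF.2.2.2 i hi
  obtain ⟨C, hCT, hCmax⟩ := T.exists_max_image Finset.card ⟨_, hsingleton⟩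
  obtain ⟨hC, hiC, hCk⟩ := Finset.mem_filter.mp hCT
  suffices hball : (S.filter fun j => caCard F i j ≤ k) = C from hball ▸ hC
  ext j
  simp only [Finset.mem_filter]
  constructor
  · rintro ⟨hjS, hle⟩
    obtain ⟨D, hD, hiD, hjD, hcard⟩ := hF.exists_card_eq_caCard hi hjS
    have hDT : D ∈ T := Finset.mem_filter.mpr ⟨hD, hiD, hcard ▸ hle⟩
    exact (hF.2.1 D hD C hC).subset_of_mem_of_card_le hiD hiC (hCmax D hDT) hjD
  · intro hj
    exact ⟨(hF.1 C hC).1 hj, (caCard_le_card hC hiC hj).trans hCk⟩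

lemma IsHierarchy.subset_of_caCard_eq {S : Finset α} {F G : Finset (Finset α)}
    (hF : IsHierarchy S F) (hG : IsHierarchy S G)
    (h : ∀ i ∈ S, ∀ j ∈ S, caCard F i j = caCard G i j) : F ⊆ G := by
  intro A hA
  obtain ⟨i, hi⟩ := (hF.1 A hA).2
  have hiS : i ∈ S := (hF.1 A hA).1 hi
  have hball : A = S.filter fun j => caCard G i j ≤ A.card := by
    conv_lhs => rw [hF.eq_filter_caCard_le hA hi]
    exact Finset.filter_congr fun j hj => by rw [h i hiS j hj]
  rw [hball]
  exact hG.filter_caCard_le_mem hiS (Finset.card_pos.mpr ⟨i, hi⟩)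

theorem ultrametric_representation_injective (S : Finset α) (F G : Finset (Finset α))
    (hF : IsHierarchy S F) (hG : IsHierarchy S G) (hne : F ≠ G) :
    ∃ i ∈ S, ∃ j ∈ S, Umat F i j ≠ Umat G i j := by
  by_contra! hU
  have hca : ∀ i ∈ S, ∀ j ∈ S, caCard F i j = caCard G i j := fun i hi j hj => by
    simpa [Umat] using hU i hi j hj
  exact hne <| (hF.subset_of_caCard_eq hG hca).antisymm
    (hG.subset_of_caCard_eq hF fun i hi j hj => (hca i hi j hj).symm)

end TreeDist
end

section
/- Let S be a finite set with |S| = n, let (𝒜,ℬ) be an NNI edge between nondegenerate hierarchies over S, and let (A,B,C) be its NNI triplet, i.e., the unique ordered triple of common clusters with 𝒜 \ ℬ = {A∪B} and ℬ \ 𝒜 = {B∪C}. Then the cluster-cardinality distance satisfies d_CC(𝒜,ℬ) = 2·|A|·|B|·|C|, and 2 ≤ d_CC(𝒜,ℬ) ≤ ⌊2n³/27⌋. -/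
open scoped Classical

/-
Along an NNI edge only the lowest common ancestors of pairs separated by the move change: for
`i ∈ A`, `j ∈ B` it grows from `A ∪ B` to `A ∪ B ∪ C`, for `i ∈ B`, `j ∈ C` it shrinks from
`A ∪ B ∪ C` to `B ∪ C`. So `U` changes by `|C|` on `A × B` and by `|A|` on `B × C` (and on the
transposed blocks), and `d_CC = 2|A||B||C|`. As `A`, `B`, `C` are nonempty and disjoint in `S`,
AM-GM gives the bounds.
-/

namespace TreeDist

open Finset

variable {α : Type*}

/-- `M` is the cluster `ca(i,j)` of the paper. -/
def IsLCA (F : Finset (Finset α)) (i j : α) (M : Finset α) : Prop :=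
  M ∈ F ∧ i ∈ M ∧ j ∈ M ∧ ∀ D ∈ F, i ∈ D → j ∈ D → M ⊆ D

section LCA

variable {F G : Finset (Finset α)} {i j : α} {M N : Finset α}

lemma IsLCA.symm (h : IsLCA F i j M) : IsLCA F j i M :=
  ⟨h.1, h.2.2.1, h.2.1, fun D hD hjD hiD => h.2.2.2 D hD hiD hjD⟩

lemma IsLCA.caCard_eq (h : IsLCA F i j M) : caCard F i j = #M := by
  obtain ⟨hM, hi, hj, hmin⟩ := h
  refine le_antisymm (Nat.sInf_le ⟨M, hM, hi, hj, rfl⟩) (le_csInf ⟨#M, M, hM, hi, hj, rfl⟩ ?_)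
  rintro n ⟨D, hD, hiD, hjD, rfl⟩
  exact card_le_card (hmin D hD hiD hjD)

lemma IsLCA.eq_of_mem (hM : IsLCA F i j M) (hN : IsLCA G i j N) (hMG : M ∈ G) (hNF : N ∈ F) :
    M = N :=
  (hM.2.2.2 N hNF hN.2.1 hN.2.2.1).antisymm (hN.2.2.2 M hMG hM.2.1 hM.2.2.1)

lemma caCard_comm (F : Finset (Finset α)) (i j : α) : caCard F i j = caCard F j i := by
  simp only [caCard, and_left_comm]

end LCA

lemma twenty_seven_mul_le_add_pow_three (a b c : ℕ) : 27 * (a * b * c) ≤ (a + b + c) ^ 3 := by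
  have ha : (0 : ℤ) ≤ a := Int.natCast_nonneg a
  have hb : (0 : ℤ) ≤ b := Int.natCast_nonneg b
  have hc : (0 : ℤ) ≤ c := Int.natCast_nonneg c
  zify
  nlinarith [mul_nonneg ha (sq_nonneg ((b : ℤ) - c)), mul_nonneg hb (sq_nonneg ((a : ℤ) - c)),
    mul_nonneg hc (sq_nonneg ((a : ℤ) - b)), mul_nonneg (mul_nonneg ha hb) hc]

lemma two_mul_mul_mul_le_div {a b c n : ℕ} (h : a + b + c ≤ n) :
    2 * a * b * c ≤ 2 * n ^ 3 / 27 := by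
  rw [Nat.le_div_iff_mul_le (by norm_num)]
  have := twenty_seven_mul_le_add_pow_three a b c
  have := Nat.pow_le_pow_left h 3
  nlinarith

variable [DecidableEq α]

def IsLaminar (F : Finset (Finset α)) : Prop :=
  ∀ A ∈ F, ∀ B ∈ F, Compatible A B

lemma sum_sum_ite_mem_and_mem {R : Type*} [Semiring R] {S u v : Finset α}
    (hu : u ⊆ S) (hv : v ⊆ S) (w : R) :
    ∑ i ∈ S, ∑ j ∈ S, (if i ∈ u ∧ j ∈ v then w else 0) = #u * #v * w := by
  have hrow : ∀ i, ∑ j ∈ S, (if i ∈ u ∧ j ∈ v then w else 0) = if i ∈ u then #v * w else 0 := by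
    intro i
    by_cases hi : i ∈ u <;> simp [hi, sum_ite_mem, inter_eq_right.mpr hv]
  rw [sum_congr rfl fun i _ => hrow i, sum_ite_mem, inter_eq_right.mpr hu, sum_const, nsmul_eq_mul,
    mul_assoc]

lemma Compatible.subset_of_mem_of_not_mem {A D : Finset α} (h : Compatible A D) {i j : α}
    (hiA : i ∈ A) (hiD : i ∈ D) (hjD : j ∈ D) (hjA : j ∉ A) : A ⊆ D := by
  rcases h with h | h | h
  · exact absurd (mem_inter.mpr ⟨hiA, hiD⟩) (by simp [h])
  · exact h
  · exact absurd (h hjD) hjA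

lemma Compatible.disjoint_of_union_not_mem {X Y : Finset α} {G : Finset (Finset α)}
    (h : Compatible X Y) (hX : X ∈ G) (hY : Y ∈ G) (hXY : X ∪ Y ∉ G) : Disjoint X Y := by
  rcases h with h | h | h
  · exact disjoint_iff_inter_eq_empty.mpr h
  · exact absurd (by rwa [union_eq_right.mpr h]) hXY
  · exact absurd (by rwa [union_eq_left.mpr h]) hXY

lemma IsHierarchy.isLaminar {S : Finset α} {F : Finset (Finset α)} (hF : IsHierarchy S F) :
    IsLaminar F :=
  hF.2.1

lemma IsHierarchy.exists_isLCA {S : Finset α} {F : Finset (Finset α)} (hF : IsHierarchy S F)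
    {i j : α} (hi : i ∈ S) (hj : j ∈ S) : ∃ M, IsLCA F i j M := by
  obtain ⟨M, hM, hmin⟩ := exists_min_image (F.filter fun D => i ∈ D ∧ j ∈ D) card
    ⟨S, by simp [hF.2.2.1, hi, hj]⟩
  simp only [mem_filter] at hM
  refine ⟨M, hM.1, hM.2.1, hM.2.2, fun D hD hiD hjD => ?_⟩
  rcases hF.2.1 M hM.1 D hD with h | h | h
  · exact absurd (mem_inter.mpr ⟨hM.2.1, hiD⟩) (by simp [h])
  · exact h
  · exact (eq_of_subset_of_card_le h (hmin D (mem_filter.mpr ⟨hD, hiD, hjD⟩))).ge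

lemma IsLaminar.isLCA_union {F : Finset (Finset α)} (hF : IsLaminar F) {X Y : Finset α}
    (hX : X ∈ F) (hY : Y ∈ F) (hXY : X ∪ Y ∈ F) {i j : α} (hiX : i ∈ X) (hiY : i ∉ Y)
    (hjY : j ∈ Y) (hjX : j ∉ X) : IsLCA F i j (X ∪ Y) :=
  ⟨hXY, mem_union_left _ hiX, mem_union_right _ hjY, fun D hD hiD hjD =>
    union_subset ((hF X hX D hD).subset_of_mem_of_not_mem hiX hiD hjD hjX)
      ((hF Y hY D hD).subset_of_mem_of_not_mem hjY hjD hiD hiY)⟩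

lemma IsLCA.mem_and_mem_of_union {F : Finset (Finset α)} {i j : α} {X Y : Finset α}
    (h : IsLCA F i j (X ∪ Y)) (hX : X ∈ F) (hY : Y ∈ F) (hYX : ¬ Y ⊆ X) (hXY : ¬ X ⊆ Y) :
    i ∈ X ∧ j ∈ Y ∨ i ∈ Y ∧ j ∈ X := by
  obtain ⟨-, hi, hj, hmin⟩ := h
  rcases mem_union.mp hi with hiX | hiY <;> rcases mem_union.mp hj with hjX | hjY
  · exact absurd (subset_union_right.trans (hmin X hX hiX hjX)) hYX
  · exact .inl ⟨hiX, hjY⟩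
  · exact .inr ⟨hiY, hjX⟩
  · exact absurd (subset_union_left.trans (hmin Y hY hiY hjY)) hXY

lemma IsNNIMove.union_mem {F G : Finset (Finset α)} (h : IsNNIMove F G) {X Y : Finset α}
    (hFG : F \ G = {X}) (hGF : G \ F = {Y}) : X ∪ Y ∈ F ∧ X ∪ Y ∈ G := by
  obtain ⟨C, P, GP, -, ⟨-, hCP, -⟩, ⟨hGPF, hPGP, -⟩, rfl⟩ := h
  have hXF : X ∈ F \ insert (GP \ C) (F.erase P) := hFG ▸ mem_singleton_self X
  have hYG : Y ∈ insert (GP \ C) (F.erase P) \ F := hGF ▸ mem_singleton_self Y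
  have hP : X = P := by
    by_contra hne
    exact (mem_sdiff.mp hXF).2 (mem_insert_of_mem (mem_erase.mpr ⟨hne, (mem_sdiff.mp hXF).1⟩))
  have hY : Y = GP \ C := by
    rcases mem_insert.mp (mem_sdiff.mp hYG).1 with h | h
    · exact h
    · exact absurd (mem_of_mem_erase h) (mem_sdiff.mp hYG).2
  have hGP : X ∪ Y = GP := by
    rw [hP, hY]
    refine (union_subset hPGP.subset sdiff_subset).antisymm fun t ht => ?_
    by_cases htC : t ∈ C
    · exact mem_union_left _ (hCP.subset htC)
    · exact mem_union_right _ (mem_sdiff.mpr ⟨ht, htC⟩)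
  rw [hGP]
  exact ⟨hGPF, mem_insert_of_mem (mem_erase.mpr ⟨hPGP.ne', hGPF⟩)⟩

def crossWeight (A B C : Finset α) (i j : α) : ℚ :=
  (if i ∈ A ∧ j ∈ B then (#C : ℚ) else 0) + (if i ∈ B ∧ j ∈ C then (#A : ℚ) else 0)

/-- `A ∪ B ∪ C` is the grandparent cluster of the NNI move. -/
structure IsNNITriplet (S : Finset α) (F G : Finset (Finset α)) (A B C : Finset α) : Prop where
  isHierarchy_left : IsHierarchy S F
  isHierarchy_right : IsHierarchy S G
  mem_A : A ∈ F ∧ A ∈ G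
  mem_B : B ∈ F ∧ B ∈ G
  mem_C : C ∈ F ∧ C ∈ G
  sdiff_left : F \ G = {A ∪ B}
  sdiff_right : G \ F = {B ∪ C}
  union_mem_left : A ∪ B ∪ C ∈ F
  union_mem_right : A ∪ B ∪ C ∈ G

lemma IsNNIMove.isNNITriplet {S : Finset α} {F G : Finset (Finset α)} (hNNI : IsNNIMove F G)
    (hF : IsHierarchy S F) (hG : IsHierarchy S G) {A B C : Finset α}
    (hA : A ∈ F ∧ A ∈ G) (hB : B ∈ F ∧ B ∈ G) (hC : C ∈ F ∧ C ∈ G)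
    (hFG : F \ G = {A ∪ B}) (hGF : G \ F = {B ∪ C}) : IsNNITriplet S F G A B C := by
  have hunion : A ∪ B ∪ (B ∪ C) = A ∪ B ∪ C := by
    ext
    simp only [mem_union]
    tauto
  obtain ⟨hF', hG'⟩ := hNNI.union_mem hFG hGF
  exact ⟨hF, hG, hA, hB, hC, hFG, hGF, hunion ▸ hF', hunion ▸ hG'⟩

namespace IsNNITriplet

variable {S : Finset α} {F G : Finset (Finset α)} {A B C : Finset α} {i j : α}

lemma union_left_mem_left (h : IsNNITriplet S F G A B C) : A ∪ B ∈ F :=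
  (mem_sdiff.mp (h.sdiff_left ▸ mem_singleton_self _)).1

lemma union_left_not_mem_right (h : IsNNITriplet S F G A B C) : A ∪ B ∉ G :=
  (mem_sdiff.mp (h.sdiff_left ▸ mem_singleton_self _)).2

lemma union_right_mem_right (h : IsNNITriplet S F G A B C) : B ∪ C ∈ G :=
  (mem_sdiff.mp (h.sdiff_right ▸ mem_singleton_self _)).1

lemma union_right_not_mem_left (h : IsNNITriplet S F G A B C) : B ∪ C ∉ F :=
  (mem_sdiff.mp (h.sdiff_right ▸ mem_singleton_self _)).2

lemma nonempty_A (h : IsNNITriplet S F G A B C) : A.Nonempty :=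
  (h.isHierarchy_left.1 A h.mem_A.1).2

lemma nonempty_B (h : IsNNITriplet S F G A B C) : B.Nonempty :=
  (h.isHierarchy_left.1 B h.mem_B.1).2

lemma nonempty_C (h : IsNNITriplet S F G A B C) : C.Nonempty :=
  (h.isHierarchy_left.1 C h.mem_C.1).2

lemma disjoint_A_B (h : IsNNITriplet S F G A B C) : Disjoint A B :=
  (h.isHierarchy_right.isLaminar A h.mem_A.2 B h.mem_B.2).disjoint_of_union_not_mem
    h.mem_A.2 h.mem_B.2 h.union_left_not_mem_right

lemma disjoint_B_C (h : IsNNITriplet S F G A B C) : Disjoint B C :=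
  (h.isHierarchy_left.isLaminar B h.mem_B.1 C h.mem_C.1).disjoint_of_union_not_mem
    h.mem_B.1 h.mem_C.1 h.union_right_not_mem_left

lemma disjoint_union_C (h : IsNNITriplet S F G A B C) : Disjoint (A ∪ B) C := by
  rcases h.isHierarchy_left.isLaminar _ h.union_left_mem_left C h.mem_C.1 with hd | hsub | hsub
  · exact disjoint_iff_inter_eq_empty.mpr hd
  · exact absurd (h.disjoint_B_C.eq_bot_of_le (subset_union_right.trans hsub)) h.nonempty_B.ne_empty
  · exact absurd (union_eq_left.mpr hsub ▸ h.union_mem_right) h.union_left_not_mem_right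

lemma card_union_union (h : IsNNITriplet S F G A B C) : #(A ∪ B ∪ C) = #A + #B + #C := by
  rw [card_union_of_disjoint h.disjoint_union_C, card_union_of_disjoint h.disjoint_A_B]

lemma card_add_card_add_card_le (h : IsNNITriplet S F G A B C) : #A + #B + #C ≤ #S :=
  h.card_union_union ▸ card_le_card (h.isHierarchy_left.1 _ h.union_mem_left).1

lemma caCard_of_mem_A_of_mem_B (h : IsNNITriplet S F G A B C) (hi : i ∈ A) (hj : j ∈ B) :
    caCard F i j = #A + #B ∧ caCard G i j = #A + #B + #C := by
  have hiBC : i ∉ B ∪ C := disjoint_left.mp (disjoint_union_right.mpr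
    ⟨h.disjoint_A_B, disjoint_of_subset_left subset_union_left h.disjoint_union_C⟩) hi
  have hjA : j ∉ A := disjoint_right.mp h.disjoint_A_B hj
  constructor
  · rw [(h.isHierarchy_left.isLaminar.isLCA_union h.mem_A.1 h.mem_B.1 h.union_left_mem_left hi
      (fun hiB => hiBC (mem_union_left _ hiB)) hj hjA).caCard_eq,
      card_union_of_disjoint h.disjoint_A_B]
  · rw [(h.isHierarchy_right.isLaminar.isLCA_union h.mem_A.2 h.union_right_mem_right
      (union_assoc A B C ▸ h.union_mem_right) hi hiBC (mem_union_left _ hj) hjA).caCard_eq,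
      ← union_assoc, h.card_union_union]

lemma caCard_of_mem_B_of_mem_C (h : IsNNITriplet S F G A B C) (hi : i ∈ B) (hj : j ∈ C) :
    caCard F i j = #A + #B + #C ∧ caCard G i j = #B + #C := by
  have hjAB : j ∉ A ∪ B := disjoint_right.mp h.disjoint_union_C hj
  have hiC : i ∉ C := disjoint_left.mp h.disjoint_B_C hi
  constructor
  · rw [(h.isHierarchy_left.isLaminar.isLCA_union h.union_left_mem_left h.mem_C.1
      h.union_mem_left (mem_union_right _ hi) hiC hj hjAB).caCard_eq, h.card_union_union]
  · rw [(h.isHierarchy_right.isLaminar.isLCA_union h.mem_B.2 h.mem_C.2 h.union_right_mem_right hi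
      hiC hj (fun hjB => hjAB (mem_union_right _ hjB))).caCard_eq,
      card_union_of_disjoint h.disjoint_B_C]

lemma caCard_eq_of_not_cross (h : IsNNITriplet S F G A B C) (hi : i ∈ S) (hj : j ∈ S)
    (hAB : ¬ (i ∈ A ∧ j ∈ B)) (hBA : ¬ (i ∈ B ∧ j ∈ A))
    (hBC : ¬ (i ∈ B ∧ j ∈ C)) (hCB : ¬ (i ∈ C ∧ j ∈ B)) : caCard F i j = caCard G i j := by
  obtain ⟨M, hM⟩ := h.isHierarchy_left.exists_isLCA hi hj
  obtain ⟨N, hN⟩ := h.isHierarchy_right.exists_isLCA hi hj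
  have hMG : M ∈ G := by
    by_contra hMG
    obtain rfl : M = A ∪ B := mem_singleton.mp (h.sdiff_left ▸ mem_sdiff.mpr ⟨hM.1, hMG⟩)
    have := hM.mem_and_mem_of_union h.mem_A.1 h.mem_B.1
      (fun hBA => h.nonempty_B.ne_empty (h.disjoint_A_B.symm.eq_bot_of_le hBA))
      (fun hAB => h.nonempty_A.ne_empty (h.disjoint_A_B.eq_bot_of_le hAB))
    tauto
  have hNF : N ∈ F := by
    by_contra hNF
    obtain rfl : N = B ∪ C := mem_singleton.mp (h.sdiff_right ▸ mem_sdiff.mpr ⟨hN.1, hNF⟩)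
    have := hN.mem_and_mem_of_union h.mem_B.2 h.mem_C.2
      (fun hCB => h.nonempty_C.ne_empty (h.disjoint_B_C.symm.eq_bot_of_le hCB))
      (fun hBC => h.nonempty_B.ne_empty (h.disjoint_B_C.eq_bot_of_le hBC))
    tauto
  rw [hM.caCard_eq, hN.caCard_eq, hM.eq_of_mem hN hMG hNF]

lemma abs_umat_sub (h : IsNNITriplet S F G A B C) (hi : i ∈ S) (hj : j ∈ S) :
    |(Umat F i j : ℚ) - Umat G i j| = crossWeight A B C i j + crossWeight A B C j i := by
  have hAB := disjoint_left.mp h.disjoint_A_B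
  have hBA := disjoint_right.mp h.disjoint_A_B
  have hBC := disjoint_left.mp h.disjoint_B_C
  have hCB := disjoint_right.mp h.disjoint_B_C
  have hAC := disjoint_left.mp (disjoint_of_subset_left subset_union_left h.disjoint_union_C)
  have hCA := disjoint_right.mp (disjoint_of_subset_left subset_union_left h.disjoint_union_C)
  simp only [Umat, crossWeight]
  by_cases h1 : i ∈ A ∧ j ∈ B
  · obtain ⟨hF, hG⟩ := h.caCard_of_mem_A_of_mem_B h1.1 h1.2
    simp [hF, hG, h1, hAB h1.1, hAC h1.1, hBA h1.2, hBC h1.2]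
  by_cases h2 : i ∈ B ∧ j ∈ A
  · obtain ⟨hF, hG⟩ := h.caCard_of_mem_A_of_mem_B h2.2 h2.1
    simp [caCard_comm F i j, caCard_comm G i j, hF, hG, h2, hBA h2.1, hBC h2.1, hAB h2.2, hAC h2.2]
  by_cases h3 : i ∈ B ∧ j ∈ C
  · obtain ⟨hF, hG⟩ := h.caCard_of_mem_B_of_mem_C h3.1 h3.2
    simp [hF, hG, h3, hBA h3.1, hBC h3.1, hCA h3.2, hCB h3.2]
  by_cases h4 : i ∈ C ∧ j ∈ B
  · obtain ⟨hF, hG⟩ := h.caCard_of_mem_B_of_mem_C h4.2 h4.1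
    simp [caCard_comm F i j, caCard_comm G i j, hF, hG, h4, hCA h4.1, hCB h4.1, hBA h4.2, hBC h4.2]
  rw [h.caCard_eq_of_not_cross hi hj h1 h2 h3 h4]
  simp [h1, h3, and_comm.mp.mt h2, and_comm.mp.mt h4]

lemma dCC_eq (h : IsNNITriplet S F G A B C) : dCC S F G = 2 * #A * #B * #C := by
  have hsub : ∀ X ∈ F, X ⊆ S := fun X hX => (h.isHierarchy_left.1 X hX).1
  have hsum : ∑ i ∈ S, ∑ j ∈ S, crossWeight A B C i j = 2 * #A * #B * #C := by
    simp only [crossWeight, sum_add_distrib,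
      sum_sum_ite_mem_and_mem (hsub A h.mem_A.1) (hsub B h.mem_B.1),
      sum_sum_ite_mem_and_mem (hsub B h.mem_B.1) (hsub C h.mem_C.1)]
    ring
  rw [dCC, sum_congr rfl fun i hi => sum_congr rfl fun j hj => h.abs_umat_sub hi hj]
  simp only [sum_add_distrib]
  rw [sum_comm (f := fun i j => crossWeight A B C j i), hsum]
  ring

end IsNNITriplet

theorem dCC_of_nni_edge (S : Finset α) (F G : Finset (Finset α))
    (hF : Nondeg S F) (hG : Nondeg S G) (hNNI : IsNNIMove F G)
    (A B C : Finset α)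
    (hA : A ∈ F ∧ A ∈ G) (hB : B ∈ F ∧ B ∈ G) (hC : C ∈ F ∧ C ∈ G)
    (hFG : F \ G = {A ∪ B}) (hGF : G \ F = {B ∪ C}) :
    dCC S F G = ((2 * A.card * B.card * C.card : ℕ) : ℚ) ∧
    (2 : ℚ) ≤ dCC S F G ∧
    dCC S F G ≤ ((2 * S.card ^ 3 / 27 : ℕ) : ℚ) := by
  have h := hNNI.isNNITriplet hF.1 hG.1 hA hB hC hFG hGF
  have hlower : 2 * 1 * 1 * 1 ≤ 2 * #A * #B * #C := Nat.mul_le_mul (Nat.mul_le_mul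
    (Nat.mul_le_mul le_rfl h.nonempty_A.card_pos) h.nonempty_B.card_pos) h.nonempty_C.card_pos
  have hbound := two_mul_mul_mul_le_div h.card_add_card_add_card_le
  rw [h.dCC_eq]
  exact ⟨by push_cast; ring, by exact_mod_cast hlower, by exact_mod_cast hbound⟩

end TreeDist
end

section
/- Let 𝒜, ℬ be nondegenerate hierarchies over a finite set S. Then for every I ∈ 𝒜 and J ∈ ℬ, the restricted crossing count is symmetric: η_{𝒜,ℬ}(I,J) = η_{ℬ,𝒜}(J,I). Consequently Σ_{I∈𝒜, J∈ℬ} θ(η_{𝒜,ℬ}(I,J)) = Σ_{J∈ℬ, I∈𝒜} θ(η_{ℬ,𝒜}(J,I)), i.e., the closed-form NNI navigation distance d_Nav is symmetric on nondegenerate hierarchies. -/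
open scoped Classical

namespace TreeDist

variable {α : Type*} [DecidableEq α]

/-!
In a nondegenerate hierarchy every cluster is a leaf or splits into exactly two disjoint
children: the parent map gives `∑ I, #(children I) = #F - 1`, while there are
`#F - #S = #S - 1` non-leaf clusters, each with at least two children.
Restricting the two splittings to `I ∩ J` therefore yields two partitions
`A₁ ∪ A₂ = B₁ ∪ B₂` of the same set into at most two blocks. A block `Aᵢ` crosses `Bⱼ`
exactly when the three intersections `Aₖ ∩ Bₗ` other than the one opposite to `(i, j)` are
nonempty, so either no pair of blocks crosses, exactly one does, or all four do; in each
case as many `A`'s as `B`'s cross something.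
-/

open Finset

noncomputable def crossCount (P Q : Finset (Finset α)) : ℕ :=
  (P.filter fun A => ∃ B ∈ Q, ¬ Compatible A B).card

theorem eta_eq_crossCount (F G : Finset (Finset α)) (I J : Finset α) :
    eta F G I J = crossCount (restrictFam (children F I) J) (restrictFam (children G J) I) :=
  rfl

theorem compatible_comm {A B : Finset α} : Compatible A B ↔ Compatible B A := by
  unfold Compatible
  rw [inter_comm]
  tauto

theorem inter_nonempty_of_not_compatible {A B : Finset α} (h : ¬ Compatible A B) :
    (A ∩ B).Nonempty :=
  nonempty_iff_ne_empty.mpr fun h' => h (Or.inl h')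

theorem not_subset_iff_inter_nonempty {A B B' : Finset α} (hA : A ⊆ B ∪ B')
    (hB : Disjoint B B') : ¬ A ⊆ B ↔ (A ∩ B').Nonempty := by
  constructor
  · intro h
    obtain ⟨x, hxA, hxB⟩ := not_subset.mp h
    exact ⟨x, mem_inter.mpr ⟨hxA, (mem_union.mp (hA hxA)).resolve_left hxB⟩⟩
  · rintro ⟨x, hx⟩ h
    rw [mem_inter] at hx
    exact disjoint_left.mp hB (h hx.1) hx.2

theorem not_compatible_iff_of_union_eq {A A' B B' : Finset α} (hU : A ∪ A' = B ∪ B')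
    (hA : Disjoint A A') (hB : Disjoint B B') :
    ¬ Compatible A B ↔ (A ∩ B).Nonempty ∧ (A ∩ B').Nonempty ∧ (A' ∩ B).Nonempty := by
  have hAB : ¬ A ⊆ B ↔ (A ∩ B').Nonempty :=
    not_subset_iff_inter_nonempty (hU ▸ subset_union_left) hB
  have hBA : ¬ B ⊆ A ↔ (A' ∩ B).Nonempty := by
    rw [inter_comm]
    exact not_subset_iff_inter_nonempty (hU ▸ subset_union_left) hA
  rw [← hAB, ← hBA, Compatible, ← not_nonempty_iff_eq_empty]
  tauto

theorem crossCount_filter_nonempty (P Q : Finset (Finset α)) :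
    crossCount (P.filter Finset.Nonempty) (Q.filter Finset.Nonempty) = crossCount P Q := by
  unfold crossCount
  congr 1
  ext A
  simp only [mem_filter]
  constructor
  · rintro ⟨⟨hA, -⟩, B, ⟨hB, -⟩, h⟩
    exact ⟨hA, B, hB, h⟩
  · rintro ⟨hA, B, hB, h⟩
    have hAB := inter_nonempty_of_not_compatible h
    exact ⟨⟨hA, hAB.mono inter_subset_left⟩, B, ⟨hB, hAB.mono inter_subset_right⟩, h⟩

theorem crossCount_pair {A₁ A₂ : Finset α} (hA : Disjoint A₁ A₂) (Q : Finset (Finset α)) :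
    crossCount {A₁, A₂} Q =
      (if ∃ B ∈ Q, ¬ Compatible A₁ B then 1 else 0) +
        (if ∃ B ∈ Q, ¬ Compatible A₂ B then 1 else 0) := by
  rcases eq_or_ne A₁ A₂ with rfl | hne
  · obtain rfl : A₁ = ∅ := (disjoint_self_iff_empty A₁).mp hA
    simp [crossCount, Compatible]
  · rw [crossCount, card_filter, sum_pair hne]

theorem crossCount_pair_comm {A₁ A₂ B₁ B₂ : Finset α} (hU : A₁ ∪ A₂ = B₁ ∪ B₂)
    (hA : Disjoint A₁ A₂) (hB : Disjoint B₁ B₂) :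
    crossCount {A₁, A₂} {B₁, B₂} = crossCount {B₁, B₂} {A₁, A₂} := by
  have c₁₁ := not_compatible_iff_of_union_eq hU hA hB
  have c₁₂ := not_compatible_iff_of_union_eq (hU.trans (union_comm _ _)) hA hB.symm
  have c₂₁ := not_compatible_iff_of_union_eq ((union_comm _ _).trans hU) hA.symm hB
  have c₂₂ := not_compatible_iff_of_union_eq
    ((union_comm _ _).trans (hU.trans (union_comm _ _))) hA.symm hB.symm
  simp only [crossCount_pair hA, crossCount_pair hB, mem_insert, mem_singleton,
    exists_eq_or_imp, exists_eq_left, compatible_comm (A := B₁), compatible_comm (A := B₂),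
    c₁₁, c₁₂, c₂₁, c₂₂]
  by_cases (A₁ ∩ B₁).Nonempty <;> by_cases (A₁ ∩ B₂).Nonempty <;>
    by_cases (A₂ ∩ B₁).Nonempty <;> by_cases (A₂ ∩ B₂).Nonempty <;> simp [*]

section Hierarchy

variable {S : Finset α} {F : Finset (Finset α)} {I C : Finset α}

omit [DecidableEq α] in
theorem mem_children : C ∈ children F I ↔ C ∈ F ∧ IsParent F C I :=
  mem_filter

omit [DecidableEq α] in
theorem IsParent.unique {P P' : Finset α} (h : IsParent F C P) (h' : IsParent F C P') :
    P = P' :=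
  subset_antisymm (h.2.2 P' h'.1 h'.2.1) (h'.2.2 P h.1 h.2.1)

theorem IsHierarchy.exists_isParent (hF : IsHierarchy S F) (hC : C ∈ F) (hCS : C ≠ S) :
    ∃ P, IsParent F C P := by
  obtain ⟨hsub, hlam, hSF, -⟩ := hF
  have hT : (F.filter (C ⊂ ·)).Nonempty :=
    ⟨S, mem_filter.mpr ⟨hSF, (hsub C hC).1.ssubset_of_ne hCS⟩⟩
  obtain ⟨P, hPT, hPmin⟩ := (F.filter (C ⊂ ·)).exists_min_image card hT
  obtain ⟨hPF, hCP⟩ := mem_filter.mp hPT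
  refine ⟨P, hPF, hCP, fun Q hQ hCQ => ?_⟩
  rcases hlam P hPF Q hQ with hPQ | hPQ | hQP
  · obtain ⟨x, hx⟩ := (hsub C hC).2
    have : x ∈ P ∩ Q := mem_inter.mpr ⟨hCP.subset hx, hCQ.subset hx⟩
    simp [hPQ] at this
  · exact hPQ
  · exact (eq_of_subset_of_card_le hQP (hPmin Q (mem_filter.mpr ⟨hQ, hCQ⟩))).ge

theorem IsHierarchy.exists_mem_children (hF : IsHierarchy S F) (hI : I ∈ F) (h : 1 < #I)
    {i : α} (hi : i ∈ I) : ∃ C ∈ children F I, i ∈ C := by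
  obtain ⟨hsub, hlam, -, hsing⟩ := hF
  have hiI : ({i} : Finset α) ⊂ I := by
    refine (singleton_subset_iff.mpr hi).ssubset_of_ne ?_
    rintro rfl
    simp at h
  have hT : (F.filter fun Q => i ∈ Q ∧ Q ⊂ I).Nonempty :=
    ⟨{i}, mem_filter.mpr ⟨hsing i ((hsub I hI).1 hi), mem_singleton_self i, hiI⟩⟩
  obtain ⟨C, hCT, hCmax⟩ := (F.filter fun Q => i ∈ Q ∧ Q ⊂ I).exists_max_image card hT
  obtain ⟨hCF, hiC, hCI⟩ := mem_filter.mp hCT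
  refine ⟨C, mem_children.mpr ⟨hCF, hI, hCI, fun Q hQ hCQ => ?_⟩, hiC⟩
  rcases hlam Q hQ I hI with hQI | hQI | hIQ
  · have : i ∈ Q ∩ I := mem_inter.mpr ⟨hCQ.subset hiC, hi⟩
    simp [hQI] at this
  · rcases eq_or_ne Q I with rfl | hne
    · exact subset_rfl
    · have hle := hCmax Q (mem_filter.mpr
        ⟨hQ, hCQ.subset hiC, hQI.ssubset_of_ne hne⟩)
      exact absurd (card_lt_card hCQ) (not_lt.mpr hle)
  · exact hIQ

omit [DecidableEq α] in
theorem subset_of_mem_children (h : C ∈ children F I) : C ⊆ I :=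
  (mem_children.mp h).2.2.1.subset

theorem IsHierarchy.disjoint_of_mem_children (hF : IsHierarchy S F) {C' : Finset α}
    (hC : C ∈ children F I) (hC' : C' ∈ children F I) (hne : C ≠ C') : Disjoint C C' := by
  obtain ⟨hCF, -, hCI, hCmin⟩ := mem_children.mp hC
  obtain ⟨hC'F, -, hC'I, hC'min⟩ := mem_children.mp hC'
  rcases hF.2.1 C hCF C' hC'F with h | h | h
  · exact disjoint_iff_inter_eq_empty.mpr h
  · exact absurd (hCmin C' hC'F (h.ssubset_of_ne hne)) hC'I.not_subset
  · exact absurd (hC'min C hCF (h.ssubset_of_ne hne.symm)) hCI.not_subset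

theorem IsHierarchy.children_eq_empty (hF : IsHierarchy S F) (h : #I ≤ 1) :
    children F I = ∅ := by
  refine eq_empty_of_forall_notMem fun C hC => ?_
  obtain ⟨hCF, -, hCI, -⟩ := mem_children.mp hC
  have := card_lt_card hCI
  have := (hF.1 C hCF).2.card_pos
  omega

theorem IsHierarchy.two_le_card_children (hF : IsHierarchy S F) (hI : I ∈ F) (h : 1 < #I) :
    2 ≤ #(children F I) := by
  obtain ⟨i, hi⟩ : I.Nonempty := card_pos.mp (by omega)
  obtain ⟨C, hC, hiC⟩ := hF.exists_mem_children hI h hi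
  obtain ⟨j, hjI, hjC⟩ := exists_of_ssubset (mem_children.mp hC).2.2.1
  obtain ⟨C', hC', hjC'⟩ := hF.exists_mem_children hI h hjI
  exact one_lt_card.mpr ⟨C, hC, C', hC', fun hCC' => hjC (hCC' ▸ hjC')⟩

theorem IsHierarchy.sum_card_children (hF : IsHierarchy S F) :
    ∑ I ∈ F, #(children F I) = #F - 1 := by
  have hcover : F.biUnion (children F) = F.erase S := by
    ext C
    simp only [mem_biUnion, mem_erase, mem_children]
    constructor
    · rintro ⟨P, hP, hCF, hCP⟩
      refine ⟨?_, hCF⟩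
      rintro rfl
      exact lt_irrefl C (lt_of_lt_of_le hCP.2.1 (hF.1 P hP).1)
    · rintro ⟨hCS, hCF⟩
      obtain ⟨P, hCP⟩ := hF.exists_isParent hCF hCS
      exact ⟨P, hCP.1, hCF, hCP⟩
  have hdisj : (F : Set (Finset α)).PairwiseDisjoint (children F) :=
    fun I₁ _ I₂ _ hne => disjoint_left.mpr fun _ h₁ h₂ =>
      hne ((mem_children.mp h₁).2.unique (mem_children.mp h₂).2)
  rw [← card_biUnion hdisj, hcover, card_erase_of_mem hF.2.2.1]

theorem IsHierarchy.card_filter_card_le_one (hF : IsHierarchy S F) :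
    #(F.filter (#· ≤ 1)) = #S := by
  have hleaves : F.filter (#· ≤ 1) = S.image singleton := by
    ext A
    simp only [mem_filter, mem_image]
    constructor
    · rintro ⟨hAF, hA⟩
      obtain ⟨i, rfl⟩ := card_eq_one.mp (le_antisymm hA (hF.1 A hAF).2.card_pos)
      exact ⟨i, (hF.1 _ hAF).1 (mem_singleton_self i), rfl⟩
    · rintro ⟨i, hi, rfl⟩
      exact ⟨hF.2.2.2 i hi, (card_singleton i).le⟩
  rw [hleaves, card_image_of_injective _ singleton_injective]

theorem Nondeg.card_children_eq_two (hF : Nondeg S F) (hI : I ∈ F) (h : 1 < #I) :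
    #(children F I) = 2 := by
  obtain ⟨hH, hcard⟩ := hF
  have hinternal : ∑ J ∈ F.filter (1 < #·), #(children F J) = #F - 1 := by
    rw [sum_filter_of_ne fun J _ hJ => ?_, hH.sum_card_children]
    by_contra hJ1
    exact hJ (by rw [hH.children_eq_empty (not_lt.mp hJ1), card_empty])
  have hcount : #(F.filter (1 < #·)) = #S - 1 := by
    have := card_filter_add_card_filter_not (s := F) (p := (1 < #·))
    simp only [not_lt] at this
    have := hH.card_filter_card_le_one
    omega
  have hSpos : 0 < #S := (hH.1 S hH.2.2.1).2.card_pos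
  have hsum : ∑ J ∈ F.filter (1 < #·), #(children F J) = ∑ J ∈ F.filter (1 < #·), 2 := by
    rw [hinternal, sum_const, hcount, smul_eq_mul]
    omega
  have hle : ∀ J ∈ F.filter (1 < #·), 2 ≤ #(children F J) := fun J hJ =>
    hH.two_le_card_children (mem_filter.mp hJ).1 (mem_filter.mp hJ).2
  exact ((sum_eq_sum_iff_of_le hle).mp hsum.symm I (mem_filter.mpr ⟨hI, h⟩)).symm

theorem Nondeg.children_eq_empty_or_pair (hF : Nondeg S F) (hI : I ∈ F) :
    children F I = ∅ ∨
      ∃ C₁ C₂, children F I = {C₁, C₂} ∧ Disjoint C₁ C₂ ∧ C₁ ∪ C₂ = I := by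
  rcases le_or_gt #I 1 with h | h
  · exact Or.inl (hF.1.children_eq_empty h)
  obtain ⟨C₁, C₂, hne, hch⟩ := card_eq_two.mp (hF.card_children_eq_two hI h)
  have h₁ : C₁ ∈ children F I := by simp [hch]
  have h₂ : C₂ ∈ children F I := by simp [hch]
  refine Or.inr ⟨C₁, C₂, hch, hF.1.disjoint_of_mem_children h₁ h₂ hne,
    union_subset (subset_of_mem_children h₁) (subset_of_mem_children h₂) |>.antisymm
      fun i hi => ?_⟩
  obtain ⟨C, hC, hiC⟩ := hF.1.exists_mem_children hI h hi
  rw [hch, mem_insert, mem_singleton] at hC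
  rcases hC with rfl | rfl
  exacts [mem_union_left _ hiC, mem_union_right _ hiC]

end Hierarchy

theorem restrictFam_pair (C₁ C₂ K : Finset α) :
    restrictFam {C₁, C₂} K =
      ({C₁ ∩ K, C₂ ∩ K} : Finset (Finset α)).filter Finset.Nonempty := by
  rw [restrictFam, image_insert, image_singleton]

theorem Nondeg.eta_comm {S : Finset α} {F G : Finset (Finset α)} (hF : Nondeg S F)
    (hG : Nondeg S G) {I J : Finset α} (hI : I ∈ F) (hJ : J ∈ G) :
    eta F G I J = eta G F J I := by
  rw [eta_eq_crossCount, eta_eq_crossCount]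
  rcases hF.children_eq_empty_or_pair hI with hI₀ | ⟨C₁, C₂, hC, hCd, hCu⟩
  · simp [hI₀, restrictFam, crossCount]
  rcases hG.children_eq_empty_or_pair hJ with hJ₀ | ⟨D₁, D₂, hD, hDd, hDu⟩
  · simp [hJ₀, restrictFam, crossCount]
  rw [hC, hD, restrictFam_pair, restrictFam_pair, crossCount_filter_nonempty,
    crossCount_filter_nonempty]
  refine crossCount_pair_comm ?_ (hCd.mono inter_subset_left inter_subset_left)
    (hDd.mono inter_subset_left inter_subset_left)
  rw [← union_inter_distrib_right, ← union_inter_distrib_right, hCu, hDu,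
    inter_comm]

theorem eta_symm_and_dNav_symm (S : Finset α) (F G : Finset (Finset α))
    (hF : Nondeg S F) (hG : Nondeg S G) :
    (∀ I ∈ F, ∀ J ∈ G, eta F G I J = eta G F J I) ∧ dNav F G = dNav G F := by
  have h : ∀ I ∈ F, ∀ J ∈ G, eta F G I J = eta G F J I := fun I hI J hJ =>
    hF.eta_comm hG hI hJ
  refine ⟨h, ?_⟩
  rw [dNav, dNav, sum_comm]
  exact sum_congr rfl fun J hJ => sum_congr rfl fun I hI => by rw [h I hI J hJ]

end TreeDist
end
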